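/- arXiv:1803.04521 — 11 statements merged into one kernel-verified Lean document; each statement's English description precedes it below -/
import Mathlib

section
/- Let N ≥ 2, l and m be positive integers with 1 ≤ l ≤ N−1 and 1 ≤ m ≤ N, and suppose gcd(N, l) = 1. Then ‖U_l(m,N)‖_{ψ₂} ≤ sin(mπ/N)/(√(ln 2) · sin(π/N)), where ‖U_l(m,N)‖_{ψ₂} = inf{K > 0 : C(N,m)^{−1} Σ_{S ⊆ {1,…,N}, |S|=m} exp((Σ_{n∈S} cos(2πnl/N))²/K²) ≤ 2}. -/
open Real Finset

private lemma cos_telescope (θ δ : ℝ) :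
    Real.sin (θ + δ) - Real.sin (θ - δ) = 2 * Real.cos θ * Real.sin δ := by
  rw [Real.sin_add, Real.sin_sub]; ring

/-- Key lemma: sum of cosines at `m` distinct grid points (shifted by any phase `φ`)
is at most `sin(mπ/N)/sin(π/N)`. -/
lemma sum_cos_grid_le (N : ℕ) (hN : 2 ≤ N) (T : Finset ℕ) (hT : T ⊆ Finset.range N) (φ : ℝ) :
    ∑ k ∈ T, Real.cos (2 * π * k / N + φ) ≤
      Real.sin (T.card * π / N) / Real.sin (π / N) := by
  have hN0 : (0:ℝ) < N := by
    have : (2:ℝ) ≤ N := by exact_mod_cast hN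
    linarith
  have hN2 : (2:ℝ) ≤ N := by exact_mod_cast hN
  set δ : ℝ := π / N with hδdef
  have hδ0 : 0 < δ := by positivity
  have hδlt : δ < π := by
    rw [hδdef, div_lt_iff₀ hN0]
    nlinarith [pi_pos]
  have hsinδ : 0 < Real.sin δ := Real.sin_pos_of_pos_of_lt_pi hδ0 hδlt
  set m := T.card with hm
  have hmN : m ≤ N := by
    have h1 := Finset.card_le_card hT
    simpa using h1
  set s : ℝ := m * π / N with hs
  have hmR : (m:ℝ) ≤ N := by exact_mod_cast hmN
  have hs0 : 0 ≤ s := by positivity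
  have hsπ : s ≤ π := by
    rw [hs, div_le_iff₀ hN0]
    nlinarith [pi_pos]
  set c : ℝ := Real.cos s with hc
  set h : ℝ → ℝ := fun x => max (Real.cos x - c) 0 with hh
  have hhc : Continuous h := (Real.continuous_cos.sub continuous_const).max continuous_const
  have hhnn : ∀ x, 0 ≤ h x := fun x => le_max_right _ _
  set a : ℕ → ℝ := fun k => 2 * π * k / N + φ - δ with ha
  set b : ℕ → ℝ := fun k => 2 * π * k / N + φ + δ with hb
  have hab : ∀ k, a k ≤ b k := by
    intro k; simp only [ha, hb]; linarith
  -- step 1 : each interval integral of cos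
  have step1 : ∀ k, ∫ x in Set.Ioc (a k) (b k), Real.cos x
      = 2 * Real.cos (2 * π * k / N + φ) * Real.sin δ := by
    intro k
    rw [← intervalIntegral.integral_of_le (hab k), integral_cos]
    exact cos_telescope (2 * π * k / N + φ) δ
  -- pointwise bound
  have hch : ∀ x, Real.cos x ≤ c + h x := by
    intro x
    have := le_max_left (Real.cos x - c) 0
    simp only [hh]; linarith
  -- step 3 : per-interval bound
  have step3 : ∀ k, ∫ x in Set.Ioc (a k) (b k), Real.cos x
      ≤ c * (2*δ) + ∫ x in Set.Ioc (a k) (b k), h x := by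
    intro k
    have hint1 : MeasureTheory.IntegrableOn Real.cos (Set.Ioc (a k) (b k)) :=
      Real.continuous_cos.integrableOn_Ioc
    have hint2 : MeasureTheory.IntegrableOn h (Set.Ioc (a k) (b k)) := hhc.integrableOn_Ioc
    have hintc : MeasureTheory.IntegrableOn (fun _ : ℝ => c) (Set.Ioc (a k) (b k)) :=
      continuous_const.integrableOn_Ioc
    have h1 : ∫ x in Set.Ioc (a k) (b k), Real.cos x
        ≤ ∫ x in Set.Ioc (a k) (b k), (c + h x) :=
      MeasureTheory.integral_mono hint1 (hintc.add hint2) hch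
    have h2 : ∫ x in Set.Ioc (a k) (b k), (c + h x)
        = (∫ _x in Set.Ioc (a k) (b k), c) + ∫ x in Set.Ioc (a k) (b k), h x :=
      MeasureTheory.integral_add hintc hint2
    have h3 : (∫ _x in Set.Ioc (a k) (b k), c) = c * (2*δ) := by
      rw [MeasureTheory.setIntegral_const, Real.volume_real_Ioc, smul_eq_mul,
        max_eq_left (by linarith [hab k] : (0:ℝ) ≤ b k - a k)]
      have : b k - a k = 2*δ := by simp only [ha, hb]; ring
      rw [this]; ring
    linarith
  -- disjointness
  have key_lt : ∀ i j : ℕ, i < j → b i ≤ a j := by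
    intro i j hij
    have h1 : (i:ℝ) + 1 ≤ j := by exact_mod_cast hij
    simp only [ha, hb, hδdef]
    rw [← sub_nonneg]
    rw [show 2*π*(j:ℝ)/N + φ - π/N - (2*π*(i:ℝ)/N + φ + π/N) = 2*π*((j:ℝ) - i - 1)/N by ring]
    apply div_nonneg _ hN0.le
    nlinarith [pi_pos]
  have hdisj : (↑T : Set ℕ).Pairwise (Function.onFun Disjoint fun k => Set.Ioc (a k) (b k)) := by
    intro k _ k' _ hne
    rcases hne.lt_or_gt with hlt | hlt
    · apply Set.disjoint_left.2
      intro x hx hx'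
      exact absurd (lt_of_le_of_lt (hx.2.trans (key_lt k k' hlt)) hx'.1) (lt_irrefl x)
    · apply Set.disjoint_left.2
      intro x hx hx'
      exact absurd (lt_of_le_of_lt (hx'.2.trans (key_lt k' k hlt)) hx.1) (lt_irrefl x)
  have hsum_h : ∑ k ∈ T, ∫ x in Set.Ioc (a k) (b k), h x
      = ∫ x in (⋃ k ∈ T, Set.Ioc (a k) (b k)), h x :=
    (MeasureTheory.integral_biUnion_finset T (fun k _ => measurableSet_Ioc) hdisj
      (fun k _ => hhc.integrableOn_Ioc)).symm
  -- window containment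
  have hsub : (⋃ k ∈ T, Set.Ioc (a k) (b k)) ⊆ Set.Ioc (φ - δ) ((φ - δ) + 2*π) := by
    intro x hx
    simp only [Set.mem_iUnion] at hx
    obtain ⟨k, hk, hxk⟩ := hx
    have hkN : k < N := Finset.mem_range.1 (hT hk)
    have hkR : (k:ℝ) + 1 ≤ N := by exact_mod_cast hkN
    constructor
    · have : φ - δ ≤ a k := by
        simp only [ha]
        have : 0 ≤ 2 * π * k / N := by positivity
        linarith
      exact lt_of_le_of_lt this hxk.1
    · have hbk : b k ≤ (φ - δ) + 2*π := by
        simp only [hb, hδdef]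
        rw [← sub_nonneg, show φ - π/(N:ℝ) + 2*π - (2*π*(k:ℝ)/N + φ + π/N)
          = (2*π*(N:ℝ) - 2*π*k - 2*π)/N by field_simp; ring]
        apply div_nonneg _ hN0.le
        nlinarith [pi_pos]
      exact hxk.2.trans hbk
  have hmono : ∫ x in (⋃ k ∈ T, Set.Ioc (a k) (b k)), h x
      ≤ ∫ x in Set.Ioc (φ - δ) ((φ - δ) + 2*π), h x := by
    apply MeasureTheory.setIntegral_mono_set hhc.integrableOn_Ioc
    · exact MeasureTheory.ae_of_all _ hhnn
    · exact HasSubset.Subset.eventuallyLE hsub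
  -- periodic shift of window integral
  have hper : Function.Periodic h (2*π) := by
    intro x; simp only [hh, Real.cos_add_two_pi]
  have hwin : ∫ x in Set.Ioc (φ - δ) ((φ - δ) + 2*π), h x = ∫ x in (-π)..π, h x := by
    rw [← intervalIntegral.integral_of_le (by linarith [pi_pos] : φ - δ ≤ (φ - δ) + 2*π)]
    have := hper.intervalIntegral_add_eq (φ - δ) (-π)
    rw [this, show -π + 2*π = π by ring]
  -- compute ∫_{-π}^{π} h
  have hmid : ∫ x in (-s)..s, h x = 2 * Real.sin s - 2 * c * s := by
    have heq : Set.EqOn h (fun x => Real.cos x - c) (Set.uIcc (-s) s) := by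
      intro x hx
      rw [Set.uIcc_of_le (by linarith : -s ≤ s)] at hx
      have h1 : |x| ≤ s := abs_le.2 ⟨hx.1, hx.2⟩
      have h2 : c ≤ Real.cos x := by
        rw [← Real.cos_abs x]
        exact Real.cos_le_cos_of_nonneg_of_le_pi (abs_nonneg x) hsπ h1
      simp only [hh]
      exact max_eq_left (by linarith)
    rw [intervalIntegral.integral_congr heq,
      intervalIntegral.integral_sub (Real.continuous_cos.intervalIntegrable _ _)
        (intervalIntegrable_const), integral_cos,
      intervalIntegral.integral_const]
    rw [Real.sin_neg]
    simp only [smul_eq_mul]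
    ring
  have hright : ∫ x in s..π, h x = 0 := by
    have heq : Set.EqOn h (fun _ => (0:ℝ)) (Set.uIcc s π) := by
      intro x hx
      rw [Set.uIcc_of_le hsπ] at hx
      have h1 : Real.cos x ≤ c := Real.cos_le_cos_of_nonneg_of_le_pi hs0 hx.2 hx.1
      simp only [hh]
      exact max_eq_right (by linarith)
    rw [intervalIntegral.integral_congr heq]
    simp
  have hleft : ∫ x in (-π)..(-s), h x = 0 := by
    have heq : Set.EqOn h (fun _ => (0:ℝ)) (Set.uIcc (-π) (-s)) := by
      intro x hx
      rw [Set.uIcc_of_le (by linarith : -π ≤ -s)] at hx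
      have h1 : Real.cos (-x) ≤ c := by
        apply Real.cos_le_cos_of_nonneg_of_le_pi hs0 (by linarith [hx.1]) (by linarith [hx.2])
      rw [Real.cos_neg] at h1
      simp only [hh]
      exact max_eq_right (by linarith)
    rw [intervalIntegral.integral_congr heq]
    simp
  have hsplit : ∫ x in (-π)..π, h x = 2 * Real.sin s - 2 * c * s := by
    have i1 : IntervalIntegrable h MeasureTheory.volume (-π) (-s) := hhc.intervalIntegrable _ _
    have i2 : IntervalIntegrable h MeasureTheory.volume (-s) s := hhc.intervalIntegrable _ _
    have i3 : IntervalIntegrable h MeasureTheory.volume s π := hhc.intervalIntegrable _ _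
    have e1 := intervalIntegral.integral_add_adjacent_intervals i1 i2
    have e2 := intervalIntegral.integral_add_adjacent_intervals (i1.trans i2) i3
    rw [← e2, ← e1, hleft, hmid, hright]
    ring
  -- assemble
  have hms : (m:ℝ) * δ = s := by rw [hs, hδdef]; ring
  have main : (∑ k ∈ T, Real.cos (2*π*k/N + φ)) * (2 * Real.sin δ) ≤ 2 * Real.sin s := by
    have c1 : (∑ k ∈ T, Real.cos (2*π*k/N + φ)) * (2 * Real.sin δ)
        = ∑ k ∈ T, ∫ x in Set.Ioc (a k) (b k), Real.cos x := by
      rw [Finset.sum_mul]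
      exact Finset.sum_congr rfl (fun k _ => by rw [step1 k]; ring)
    have c2 : ∑ k ∈ T, ∫ x in Set.Ioc (a k) (b k), Real.cos x
        ≤ ∑ k ∈ T, (c * (2*δ) + ∫ x in Set.Ioc (a k) (b k), h x) :=
      Finset.sum_le_sum (fun k _ => step3 k)
    have c3 : ∑ k ∈ T, (c * (2*δ) + ∫ x in Set.Ioc (a k) (b k), h x)
        = (m:ℝ) * (c * (2*δ)) + ∑ k ∈ T, ∫ x in Set.Ioc (a k) (b k), h x := by
      rw [Finset.sum_add_distrib, Finset.sum_const, nsmul_eq_mul, hm]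
    have c4 : ∑ k ∈ T, ∫ x in Set.Ioc (a k) (b k), h x ≤ 2 * Real.sin s - 2 * c * s := by
      rw [hsum_h]
      calc ∫ x in (⋃ k ∈ T, Set.Ioc (a k) (b k)), h x
          ≤ ∫ x in Set.Ioc (φ - δ) ((φ - δ) + 2*π), h x := hmono
        _ = 2 * Real.sin s - 2 * c * s := by rw [hwin, hsplit]
    have c5 : (m:ℝ) * (c * (2*δ)) = 2 * c * s := by rw [← hms]; ring
    calc (∑ k ∈ T, Real.cos (2*π*k/N + φ)) * (2 * Real.sin δ)
        = ∑ k ∈ T, ∫ x in Set.Ioc (a k) (b k), Real.cos x := c1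
      _ ≤ ∑ k ∈ T, (c * (2*δ) + ∫ x in Set.Ioc (a k) (b k), h x) := c2
      _ = (m:ℝ) * (c * (2*δ)) + ∑ k ∈ T, ∫ x in Set.Ioc (a k) (b k), h x := c3
      _ ≤ (m:ℝ) * (c * (2*δ)) + (2 * Real.sin s - 2 * c * s) := by linarith
      _ = 2 * Real.sin s := by rw [c5]; ring
  rw [le_div_iff₀ hsinδ]
  linarith

/-- Per-subset bound: `|∑_{n∈S} cos(2πnl/N)| ≤ sin(|S|π/N)/sin(π/N)` when `gcd(N,l)=1`. -/
lemma abs_sum_cos_le (N l : ℕ) (hN : 2 ≤ N) (hgcd : Nat.gcd N l = 1)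
    (S : Finset ℕ) (hS : S ⊆ Finset.Icc 1 N) :
    |∑ n ∈ S, Real.cos (2 * π * n * l / N)| ≤
      Real.sin (S.card * π / N) / Real.sin (π / N) := by
  have hNpos : 0 < N := by omega
  have hN0 : (N:ℝ) ≠ 0 := by positivity
  set f : ℕ → ℕ := fun n => (n * l) % N with hf
  have hinj : ∀ x ∈ S, ∀ y ∈ S, f x = f y → x = y := by
    intro x hx y hy hxy
    have hx' := Finset.mem_Icc.1 (hS hx)
    have hy' := Finset.mem_Icc.1 (hS hy)
    have hmod : x * l ≡ y * l [MOD N] := hxy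
    have hxy2 : x ≡ y [MOD N] := Nat.ModEq.cancel_right_of_coprime hgcd hmod
    have hd : (N:ℤ) ∣ (y:ℤ) - (x:ℤ) := hxy2.dvd
    have hx1 : 1 ≤ x := hx'.1
    have hx2 : x ≤ N := hx'.2
    have hy1 : 1 ≤ y := hy'.1
    have hy2 : y ≤ N := hy'.2
    have habs : |(y:ℤ) - (x:ℤ)| < (N:ℤ) := by
      rw [abs_lt]
      constructor <;> omega
    have hzero := Int.eq_zero_of_abs_lt_dvd hd habs
    omega
  set T := S.image f with hT
  have hcard : T.card = S.card := Finset.card_image_of_injOn hinj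
  have hTsub : T ⊆ Finset.range N := by
    intro k hk
    rw [Finset.mem_range]
    obtain ⟨n, _, rfl⟩ := Finset.mem_image.1 hk
    exact Nat.mod_lt _ hNpos
  -- the arguments agree modulo 2π
  have harg : ∀ n : ℕ, 2*π*(n:ℝ)*l/N = 2*π*(f n)/N + ((n*l)/N : ℕ) * (2*π) := by
    intro n
    have hdm : (N:ℝ) * (((n*l)/N : ℕ):ℝ) + (((n*l) % N : ℕ):ℝ) = (n:ℝ) * l := by
      exact_mod_cast congrArg (Nat.cast : ℕ → ℝ) (Nat.div_add_mod (n*l) N)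
    simp only [hf]
    have h6 : (n:ℝ) * l = N * (((n*l)/N : ℕ):ℝ) + (((n*l) % N : ℕ):ℝ) := by linarith [hdm]
    rw [show 2*π*(n:ℝ)*l/N = 2*π*((n:ℝ)*l)/N by ring, h6]
    field_simp
    ring
  have hcos : ∀ (φ : ℝ) (n : ℕ),
      Real.cos (2*π*(f n)/N + φ) = Real.cos (2*π*(n:ℝ)*l/N + φ) := by
    intro φ n
    rw [harg n, show 2*π*((f n):ℝ)/N + (((n*l)/N : ℕ):ℝ)*(2*π) + φ
        = (2*π*((f n):ℝ)/N + φ) + ((n*l)/N : ℕ)*(2*π) by ring,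
      Real.cos_add_nat_mul_two_pi]
  have hsum : ∀ φ : ℝ, ∑ k ∈ T, Real.cos (2*π*(k:ℝ)/N + φ)
      = ∑ n ∈ S, Real.cos (2*π*(n:ℝ)*l/N + φ) := by
    intro φ
    rw [hT, Finset.sum_image hinj]
    exact Finset.sum_congr rfl (fun n _ => hcos φ n)
  have hupper := sum_cos_grid_le N hN T hTsub 0
  have hlower := sum_cos_grid_le N hN T hTsub π
  rw [hsum 0] at hupper
  rw [hsum π] at hlower
  rw [hcard] at hupper hlower
  have e0 : ∑ n ∈ S, Real.cos (2*π*(n:ℝ)*l/N + 0) = ∑ n ∈ S, Real.cos (2*π*(n:ℝ)*l/N) := by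
    exact Finset.sum_congr rfl (fun n _ => by rw [add_zero])
  have eπ : ∑ n ∈ S, Real.cos (2*π*(n:ℝ)*l/N + π) = -∑ n ∈ S, Real.cos (2*π*(n:ℝ)*l/N) := by
    rw [← Finset.sum_neg_distrib]
    exact Finset.sum_congr rfl (fun n _ => Real.cos_add_pi _)
  rw [e0] at hupper
  rw [eπ] at hlower
  exact abs_le.2 ⟨by linarith, hupper⟩

/-- Proposition 2.4, inequality (14): if `gcd(N,l) = 1` then
`‖U_l(m,N)‖_{ψ₂} ≤ sin(mπ/N)/(√(ln 2)·sin(π/N))`. -/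
theorem subGaussianNorm_U_refined (N l m : ℕ) (hN : 2 ≤ N) (hl1 : 1 ≤ l) (hl : l ≤ N - 1)
    (hm1 : 1 ≤ m) (hmN : m ≤ N) (hgcd : Nat.gcd N l = 1) :
    sInf {K : ℝ | 0 < K ∧
        ((N.choose m : ℝ))⁻¹ * ∑ S ∈ (Finset.Icc 1 N).powersetCard m,
          Real.exp ((∑ n ∈ S, Real.cos (2 * Real.pi * n * l / N)) ^ 2 / K ^ 2) ≤ 2} ≤
      Real.sin (m * Real.pi / N) / (Real.sqrt (Real.log 2) * Real.sin (Real.pi / N)) := by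
  have hN0 : (0:ℝ) < N := by
    have : (2:ℝ) ≤ N := by exact_mod_cast hN
    linarith
  have hδlt : π / N < π := by
    rw [div_lt_iff₀ hN0]
    have : (2:ℝ) ≤ N := by exact_mod_cast hN
    nlinarith [pi_pos]
  have hsinδ : 0 < Real.sin (π / N) := Real.sin_pos_of_pos_of_lt_pi (by positivity) hδlt
  have hlog2 : 0 < Real.log 2 := Real.log_pos one_lt_two
  have key : ∀ S ∈ (Finset.Icc 1 N).powersetCard m,
      |∑ n ∈ S, Real.cos (2*π*(n:ℝ)*l/N)| ≤ Real.sin ((m:ℝ)*π/N) / Real.sin (π/N) := by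
    intro S hS
    obtain ⟨hsub, hcard⟩ := Finset.mem_powersetCard.1 hS
    have := abs_sum_cos_le N l hN hgcd S hsub
    rwa [hcard] at this
  have hcardP : ((Finset.Icc 1 N).powersetCard m).card = N.choose m := by
    rw [Finset.card_powersetCard, Nat.card_Icc]
    congr 1
  by_cases hmN' : m = N
  · -- degenerate case : m = N, RHS = 0, and every exponent is 0
    have hsinm : Real.sin ((m:ℝ)*π/N) = 0 := by
      rw [hmN', show (N:ℝ)*π/N = π by field_simp]
      exact Real.sin_pi
    have hzero : ∀ S ∈ (Finset.Icc 1 N).powersetCard m,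
        ∑ n ∈ S, Real.cos (2*π*(n:ℝ)*l/N) = 0 := by
      intro S hS
      have h1 := key S hS
      rw [hsinm, zero_div] at h1
      exact abs_eq_zero.1 (le_antisymm h1 (abs_nonneg _))
    have hset : {K : ℝ | 0 < K ∧
        ((N.choose m : ℝ))⁻¹ * ∑ S ∈ (Finset.Icc 1 N).powersetCard m,
          Real.exp ((∑ n ∈ S, Real.cos (2 * π * n * l / N)) ^ 2 / K ^ 2) ≤ 2}
        = Set.Ioi 0 := by
      ext K
      simp only [Set.mem_setOf_eq, Set.mem_Ioi]
      constructor
      · exact fun h => h.1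
      · intro hK
        refine ⟨hK, ?_⟩
        have hsum1 : ∑ S ∈ (Finset.Icc 1 N).powersetCard m,
            Real.exp ((∑ n ∈ S, Real.cos (2 * π * n * l / N)) ^ 2 / K ^ 2)
            = ((Finset.Icc 1 N).powersetCard m).card := by
          rw [Finset.sum_congr rfl (fun S hS => by rw [hzero S hS])]
          simp
        rw [hsum1, hcardP, hmN', Nat.choose_self]
        norm_num
    rw [hset, csInf_Ioi, hsinm, zero_div]
  · -- main case : m < N
    have hmlt : m < N := lt_of_le_of_ne hmN hmN'
    have hm0 : (0:ℝ) < m := by exact_mod_cast hm1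
    have hsinm : 0 < Real.sin ((m:ℝ)*π/N) := by
      apply Real.sin_pos_of_pos_of_lt_pi (by positivity)
      rw [div_lt_iff₀ hN0]
      have : (m:ℝ) < N := by exact_mod_cast hmlt
      nlinarith [pi_pos]
    have hsqrt : 0 < Real.sqrt (Real.log 2) := Real.sqrt_pos.2 hlog2
    set B : ℝ := Real.sin ((m:ℝ)*π/N) / Real.sin (π/N) with hB
    have hB0 : 0 < B := div_pos hsinm hsinδ
    set K : ℝ := Real.sin ((m:ℝ)*π/N) / (Real.sqrt (Real.log 2) * Real.sin (π/N)) with hK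
    have hK0 : 0 < K := div_pos hsinm (mul_pos hsqrt hsinδ)
    have hKB : K = B / Real.sqrt (Real.log 2) := by
      rw [hK, hB, div_div, mul_comm (Real.sin (π/(N:ℝ))) (Real.sqrt (Real.log 2))]
    have hKsq : K^2 = B^2 / Real.log 2 := by
      rw [hKB, div_pow, Real.sq_sqrt hlog2.le]
    apply csInf_le ⟨0, fun x hx => le_of_lt hx.1⟩
    refine ⟨hK0, ?_⟩
    have hterm : ∀ S ∈ (Finset.Icc 1 N).powersetCard m,
        Real.exp ((∑ n ∈ S, Real.cos (2 * π * n * l / N)) ^ 2 / K ^ 2) ≤ 2 := by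
      intro S hS
      have h1 := key S hS
      have h2 := abs_le.1 h1
      have hsq : (∑ n ∈ S, Real.cos (2*π*(n:ℝ)*l/N))^2 ≤ B^2 := by
        rw [hB]
        exact sq_le_sq' h2.1 h2.2
      have h3 : (∑ n ∈ S, Real.cos (2*π*(n:ℝ)*l/N))^2 / K^2 ≤ Real.log 2 := by
        rw [hKsq, div_le_iff₀ (div_pos (pow_pos hB0 2) hlog2)]
        rw [show Real.log 2 * (B^2 / Real.log 2) = B^2 by field_simp]
        exact hsq
      calc Real.exp ((∑ n ∈ S, Real.cos (2*π*(n:ℝ)*l/N))^2 / K^2)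
          ≤ Real.exp (Real.log 2) := Real.exp_le_exp.2 h3
        _ = 2 := Real.exp_log two_pos
    have hchoose : (0:ℝ) < (N.choose m : ℝ) := by
      exact_mod_cast Nat.choose_pos hmN
    calc ((N.choose m : ℝ))⁻¹ * ∑ S ∈ (Finset.Icc 1 N).powersetCard m,
          Real.exp ((∑ n ∈ S, Real.cos (2 * π * n * l / N)) ^ 2 / K ^ 2)
        ≤ ((N.choose m : ℝ))⁻¹ * (((Finset.Icc 1 N).powersetCard m).card • (2:ℝ)) := by
          apply mul_le_mul_of_nonneg_left _ (by positivity)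
          exact Finset.sum_le_card_nsmul _ _ 2 hterm
      _ = 2 := by
          rw [hcardP, nsmul_eq_mul]
          field_simp
end

section
/- Let N ≥ 2, l and m be positive integers with 1 ≤ l ≤ N−1 and 1 ≤ m ≤ N, and suppose gcd(N, l) = 1. Then ‖V_l(m,N)‖_{ψ₂} ≤ sin(mπ/N)·sin((2⌊N/4⌋+1)π/N)/(√(ln 2)·sin(π/N)) if m is even, and ‖V_l(m,N)‖_{ψ₂} ≤ sin(mπ/N)·sin(2⌊(N+1)/4⌋π/N)/(√(ln 2)·sin(π/N)) if m is odd, where ‖V_l(m,N)‖_{ψ₂} = inf{K > 0 : C(N,m)^{−1} Σ_{S ⊆ {1,…,N}, |S|=m} exp((Σ_{n∈S} sin(2πnl/N))²/K²) ≤ 2}. -/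
open Real Finset

/-- Generic threshold comparison: if `τ` separates `I` (values ≥ τ) from the rest
(values ≤ τ), any set of the same cardinality has smaller sum. -/
lemma aux_compare (g : ℤ → ℝ) (τ : ℝ) (U I : Finset ℤ) (hcard : U.card = I.card)
    (hI : ∀ x ∈ I, τ ≤ g x) (hU : ∀ x ∈ U, x ∉ I → g x ≤ τ) :
    ∑ x ∈ U, g x ≤ ∑ x ∈ I, g x := by
  have h1 := Finset.sum_inter_add_sum_sdiff U I g
  have h2 := Finset.sum_inter_add_sum_sdiff I U g
  have hcd : (U \ I).card = (I \ U).card := Finset.card_sdiff_comm hcard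
  have h3 : ∑ x ∈ U \ I, g x ≤ (U \ I).card • τ :=
    Finset.sum_le_card_nsmul _ _ _ (fun x hx => hU x (Finset.mem_sdiff.mp hx).1 (Finset.mem_sdiff.mp hx).2)
  have h4 : (I \ U).card • τ ≤ ∑ x ∈ I \ U, g x :=
    Finset.card_nsmul_le_sum _ _ _ (fun x hx => hI x (Finset.mem_sdiff.mp hx).1)
  have h5 : U ∩ I = I ∩ U := Finset.inter_comm U I
  rw [hcd] at h3
  rw [← h1, ← h2, h5]
  linarith [h3, h4]

/-- cos monotone in |integer argument| on the relevant range. -/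
lemma aux_cosmono (N : ℕ) (hN : 1 ≤ N) (a b : ℤ) (h1 : |a| ≤ |b|) (h2 : |b| ≤ 2*N) :
    Real.cos (π * b / (2*N)) ≤ Real.cos (π * a / (2*N)) := by
  have hNpos : (0:ℝ) < N := by exact_mod_cast hN
  have habs : ∀ c : ℤ, Real.cos (π * c / (2*N)) = Real.cos (π * |(c:ℝ)| / (2*N)) := by
    intro c
    rw [← Real.cos_abs (π * c / (2*N))]
    congr 1
    rw [abs_div, abs_mul, abs_of_pos Real.pi_pos, abs_of_pos (by positivity : (0:ℝ) < 2*N)]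
  rw [habs a, habs b]
  apply Real.cos_le_cos_of_nonneg_of_le_pi
  · positivity
  · rw [div_le_iff₀ (by positivity)]
    have : |(b:ℝ)| ≤ 2*N := by
      rw [← Int.cast_abs]
      exact_mod_cast (by exact_mod_cast h2 : (|b|:ℝ) ≤ 2*N)
    nlinarith [Real.pi_pos]
  · have ha : |(a:ℝ)| ≤ |(b:ℝ)| := by rw [← Int.cast_abs, ← Int.cast_abs]; exact_mod_cast h1
    have := Real.pi_pos
    gcongr

/-- Closed form for the sum of cosines at the optimal arithmetic progression. -/
lemma aux_sumIbest (N m : ℕ) (hN : 2 ≤ N) (x0 : ℤ) :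
    ∑ t ∈ range m, Real.cos (π * (x0 - 2*((m:ℤ)-1) + 4*t) / (2*N))
      = Real.sin (m*π/N) * Real.cos (π * x0/(2*N)) / Real.sin (π/N) := by
  have hNpos : (0:ℝ) < N := by
    have : (2:ℝ) ≤ N := by exact_mod_cast hN
    linarith
  have hNne : (N:ℝ) ≠ 0 := ne_of_gt hNpos
  have hspos : 0 < Real.sin (π/N) := by
    apply Real.sin_pos_of_pos_of_lt_pi
    · positivity
    · rw [div_lt_iff₀ hNpos]
      have h1 : (1:ℝ) < N := by
        have : (2:ℝ) ≤ N := by exact_mod_cast hN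
        linarith
      calc π = π * 1 := by ring
        _ < π * N := by exact (mul_lt_mul_iff_right₀ Real.pi_pos).mpr h1
  set L : ℤ := x0 - 2*((m:ℤ)-1) with hL
  set f : ℕ → ℝ := fun t => Real.sin (π * (L + 4*(t:ℤ) - 2) / (2*N)) with hf
  have hstep : ∀ t : ℕ, f (t+1) - f t
      = 2 * Real.sin (π/N) * Real.cos (π * (L + 4*(t:ℤ)) / (2*N)) := by
    intro t
    have h1 : π * ((L:ℝ) + 4*((t:ℕ)+1:ℕ) - 2) / (2*N)
        = π * (L + 4*(t:ℤ)) / (2*N) + π/N := by push_cast; field_simp; ring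
    have h2 : π * ((L:ℝ) + 4*(t:ℤ) - 2) / (2*N)
        = π * (L + 4*(t:ℤ)) / (2*N) - π/N := by push_cast; field_simp
    simp only [hf]
    push_cast
    rw [show (π * ((L:ℝ) + 4*((t:ℝ)+1) - 2) / (2*N)) = π * (L + 4*(t:ℝ)) / (2*N) + π/N by
        field_simp; ring,
      show (π * ((L:ℝ) + 4*(t:ℝ) - 2) / (2*N)) = π * (L + 4*(t:ℝ)) / (2*N) - π/N by
        field_simp,
      Real.sin_add, Real.sin_sub]
    push_cast
    ring
  have htel : ∑ t ∈ range m, (f (t+1) - f t) = f m - f 0 := Finset.sum_range_sub f m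
  have hsum : 2 * Real.sin (π/N) * ∑ t ∈ range m, Real.cos (π * ((L:ℝ) + 4*(t:ℤ)) / (2*N))
      = f m - f 0 := by
    rw [← htel, Finset.mul_sum]
    exact Finset.sum_congr rfl (fun t _ => (hstep t).symm)
  have hfm : f m - f 0 = 2 * Real.cos (π * x0/(2*N)) * Real.sin (m*π/N) := by
    have e1 : π * ((L:ℝ) + 4*(m:ℤ) - 2) / (2*N) = π * x0/(2*N) + m*π/N := by
      simp only [hL]; push_cast; field_simp; ring
    have e2 : π * ((L:ℝ) + 4*(0:ℤ) - 2) / (2*N) = π * x0/(2*N) - m*π/N := by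
      simp only [hL]; push_cast; field_simp; ring
    simp only [hf]
    push_cast
    rw [show π * ((L:ℝ) + 4*(m:ℝ) - 2) / (2*N) = π * x0/(2*N) + m*π/N by
        simp only [hL]; push_cast; field_simp; ring,
      show π * ((L:ℝ) + 4*(0:ℝ) - 2) / (2*N) = π * x0/(2*N) - m*π/N by
        simp only [hL]; push_cast; field_simp; ring,
      Real.sin_add, Real.sin_sub]
    ring
  have : ∑ t ∈ range m, Real.cos (π * ((L:ℝ) + 4*(t:ℤ)) / (2*N))
      = Real.sin (m*π/N) * Real.cos (π * x0/(2*N)) / Real.sin (π/N) := by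
    rw [eq_div_iff (ne_of_gt hspos)]
    nlinarith [hsum, hfm]
  rw [← this]
  apply Finset.sum_congr rfl
  intro t _
  congr 2
  simp only [hL]
  push_cast
  ring

/-- Core bound: any `m`-subset of residues has sine-sum at most the closed form. -/
lemma aux_core (N m : ℕ) (hN : 2 ≤ N) (hm1 : 1 ≤ m) (hmN : m ≤ N) (x0 : ℤ)
    (hx0l : -1 ≤ x0) (hx0r : x0 ≤ 2) (hmod : (x0 - 2*(m:ℤ) + 2 + N) % 4 = 0)
    (T : Finset ℕ) (hT : T ⊆ range N) (hTc : T.card = m) :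
    ∑ k ∈ T, Real.sin (2*π*k/N) ≤ Real.sin (m*π/N) * Real.cos (π*x0/(2*N)) / Real.sin (π/N) := by
  have hNpos : (0:ℝ) < N := by
    have : (2:ℝ) ≤ N := by exact_mod_cast hN
    linarith
  have hNne : (N:ℝ) ≠ 0 := ne_of_gt hNpos
  -- the reindexing map
  set u : ℕ → ℤ := fun k => if 4*k ≤ 3*N then 4*(k:ℤ) - N else 4*(k:ℤ) - 5*N with hu
  set g : ℤ → ℝ := fun x => Real.cos (π * x / (2*N)) with hg
  -- sin = g ∘ u on range N
  have hsin : ∀ k ∈ range N, Real.sin (2*π*k/N) = g (u k) := by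
    intro k hk
    simp only [hu, hg]
    split_ifs with hcase
    · push_cast
      rw [show π * (4*(k:ℝ) - N) / (2*N) = 2*π*k/N - π/2 by field_simp; ring]
      rw [← Real.cos_neg, neg_sub, Real.cos_pi_div_two_sub]
    · push_cast
      rw [show π * (4*(k:ℝ) - 5*N) / (2*N) = (2*π*k/N - π/2) + (-1:ℤ)*(2*π) by
          push_cast; field_simp; ring]
      rw [Real.cos_add_int_mul_two_pi]
      rw [← Real.cos_neg, neg_sub, Real.cos_pi_div_two_sub]
  -- u is injective on range N, with range properties
  have huinj : ∀ a ∈ range N, ∀ b ∈ range N, u a = u b → a = b := by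
    intro a ha b hb h
    simp only [mem_range] at ha hb
    simp only [hu] at h
    split_ifs at h <;> omega
  have huP : ∀ k ∈ range N, -2*(N:ℤ) < u k ∧ u k ≤ 2*N ∧ (u k + N) % 4 = 0 := by
    intro k hk
    simp only [mem_range] at hk
    simp only [hu]
    split_ifs <;> refine ⟨by omega, by omega, by omega⟩
  -- best interval endpoints
  obtain ⟨L, R, X, hLeq, hReq, hXl, hXr, hXnn, hX2N, hXc, hLmod⟩ :
      ∃ L R X : ℤ, L = x0 - 2*((m:ℤ)-1) ∧ R = L + 4*((m:ℤ)-1) ∧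
        -L ≤ X ∧ R ≤ X ∧ 0 ≤ X ∧ X ≤ 2*N ∧ (X = -L ∨ X = R) ∧ (L + N) % 4 = 0 := by
    refine ⟨x0 - 2*((m:ℤ)-1), _, max (-(x0 - 2*((m:ℤ)-1))) (x0 - 2*((m:ℤ)-1) + 4*((m:ℤ)-1)),
      rfl, rfl, le_max_left _ _, le_max_right _ _, ?_, ?_, ?_, by omega⟩
    · rcases max_cases (-(x0 - 2*((m:ℤ)-1))) (x0 - 2*((m:ℤ)-1) + 4*((m:ℤ)-1)) with ⟨h, _⟩ | ⟨h, _⟩ <;>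
        rw [h] <;> omega
    · rcases max_cases (-(x0 - 2*((m:ℤ)-1))) (x0 - 2*((m:ℤ)-1) + 4*((m:ℤ)-1)) with ⟨h, _⟩ | ⟨h, _⟩ <;>
        rw [h] <;> omega
    · exact max_choice _ _
  -- the best interval and the image set
  set I : Finset ℤ := (range m).image (fun t : ℕ => L + 4*(t:ℤ)) with hI
  have hIcard : I.card = m := by
    rw [hI, Finset.card_image_of_injOn, Finset.card_range]
    intro a _ b _ h
    have h' : L + 4*(a:ℤ) = L + 4*(b:ℤ) := h
    omega
  set U : Finset ℤ := T.image u with hU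
  have hUcard : U.card = m := by
    rw [hU, Finset.card_image_of_injOn, hTc]
    intro a ha b hb h
    exact huinj a (hT ha) b (hT hb) h
  have hsumTU : ∑ k ∈ T, Real.sin (2*π*k/N) = ∑ x ∈ U, g x := by
    rw [hU, Finset.sum_image (fun a ha b hb h => huinj a (hT ha) b (hT hb) h)]
    exact Finset.sum_congr rfl (fun k hk => hsin k (hT hk))
  -- threshold
  set τ : ℝ := Real.cos (π * X / (2*N)) with hτ
  have hIτ : ∀ x ∈ I, τ ≤ g x := by
    intro x hx
    simp only [hI, Finset.mem_image, Finset.mem_range] at hx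
    obtain ⟨t, ht, rfl⟩ := hx
    apply aux_cosmono N (by omega) _ X
    · rw [abs_of_nonneg hXnn, abs_le]
      exact ⟨by omega, by omega⟩
    · rw [abs_of_nonneg hXnn]; exact hX2N
  have hUτ : ∀ x ∈ U, x ∉ I → g x ≤ τ := by
    intro x hxU hxI
    simp only [hU, Finset.mem_image] at hxU
    obtain ⟨k, hk, rfl⟩ := hxU
    obtain ⟨hr1, hr2, hr3⟩ := huP k (hT hk)
    -- u k is outside [L, R] (else it would be in I)
    have hout : u k ≤ L - 4 ∨ R + 4 ≤ u k := by
      by_contra hcon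
      push_neg at hcon
      obtain ⟨hc1, hc2⟩ := hcon
      apply hxI
      simp only [hI, Finset.mem_image, Finset.mem_range]
      refine ⟨(u k - L).toNat / 4, by omega, by omega⟩
    apply aux_cosmono N (by omega) X (u k)
    · rw [abs_of_nonneg hXnn, le_abs]
      rcases hout with h | h
      · right; omega
      · left; omega
    · rw [abs_le]
      exact ⟨by omega, hr2⟩
  have hcomp : ∑ x ∈ U, g x ≤ ∑ x ∈ I, g x :=
    aux_compare g τ U I (by rw [hUcard, hIcard]) hIτ hUτ
  have hIsum : ∑ x ∈ I, g x = Real.sin (m*π/N) * Real.cos (π*x0/(2*N)) / Real.sin (π/N) := by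
    rw [hI, Finset.sum_image (by
      intro a _ b _ h
      have h' : L + 4*(a:ℤ) = L + 4*(b:ℤ) := h
      omega)]
    rw [← aux_sumIbest N m hN x0]
    apply Finset.sum_congr rfl
    intro t _
    simp only [hg]
    congr 1
    rw [hLeq]
    push_cast
    ring
  rw [hsumTU, ← hIsum]
  exact hcomp

lemma aux_absBound (N l m : ℕ) (hN : 2 ≤ N) (hgcd : Nat.gcd N l = 1)
    (hm1 : 1 ≤ m) (hmN : m ≤ N) (x0 : ℤ)
    (hx0l : -1 ≤ x0) (hx0r : x0 ≤ 2) (hmod : (x0 - 2*(m:ℤ) + 2 + N) % 4 = 0)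
    (S : Finset ℕ) (hS : S ⊆ Finset.Icc 1 N) (hSc : S.card = m) :
    |∑ n ∈ S, Real.sin (2*π*n*l/N)| ≤
      Real.sin (m*π/N) * Real.cos (π*x0/(2*N)) / Real.sin (π/N) := by
  have hNpos : (0:ℝ) < N := by
    have : (2:ℝ) ≤ N := by exact_mod_cast hN
    linarith
  have hNne : (N:ℝ) ≠ 0 := ne_of_gt hNpos
  set φ : ℕ → ℕ := fun n => n * l % N with hφ
  have hφinj : ∀ a ∈ S, ∀ b ∈ S, φ a = φ b → a = b := by
    intro a ha b hb h
    have ha' := Finset.mem_Icc.mp (hS ha)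
    have hb' := Finset.mem_Icc.mp (hS hb)
    have hmodeq : a ≡ b [MOD N] := by
      apply Nat.ModEq.cancel_right_of_coprime (c := l)
      · exact hgcd
      · exact h
    have h2 : a % N = b % N := hmodeq
    rcases eq_or_lt_of_le ha'.2 with rfl | halt
    · rcases eq_or_lt_of_le hb'.2 with rfl | hblt
      · rfl
      · rw [Nat.mod_self, Nat.mod_eq_of_lt hblt] at h2
        omega
    · rcases eq_or_lt_of_le hb'.2 with rfl | hblt
      · rw [Nat.mod_self, Nat.mod_eq_of_lt halt] at h2
        omega
      · rwa [Nat.mod_eq_of_lt halt, Nat.mod_eq_of_lt hblt] at h2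
  have hmapval : ∀ n ∈ S, Real.sin (2*π*n*l/N) = Real.sin (2*π*(φ n)/N) := by
    intro n _
    have hnl : (n * l : ℕ) = (n*l % N) + N * (n*l / N) := (Nat.mod_add_div _ _).symm
    have hc : (n:ℝ)*l = ((n*l % N : ℕ):ℝ) + (N:ℝ)*((n*l/N : ℕ):ℝ) := by
      push_cast
      exact_mod_cast congrArg (Nat.cast (R := ℝ)) hnl
    rw [show 2*π*(n:ℝ)*l/N = 2*π*((n*l % N : ℕ):ℝ)/N + ((n*l/N : ℕ):ℝ)*(2*π) by
      field_simp
      linear_combination hc]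
    rw [Real.sin_add_nat_mul_two_pi]
  set T : Finset ℕ := S.image φ with hT
  have hTsub : T ⊆ range N := by
    intro x hx
    simp only [hT, Finset.mem_image] at hx
    obtain ⟨n, _, rfl⟩ := hx
    simp only [hφ, mem_range]
    exact Nat.mod_lt _ (by omega)
  have hTc : T.card = m := by
    rw [hT, Finset.card_image_of_injOn hφinj, hSc]
  have hsum1 : ∑ n ∈ S, Real.sin (2*π*n*l/N) = ∑ k ∈ T, Real.sin (2*π*k/N) := by
    rw [hT, Finset.sum_image hφinj]
    exact Finset.sum_congr rfl hmapval
  -- upper bound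
  have hup : ∑ k ∈ T, Real.sin (2*π*k/N) ≤ _ :=
    aux_core N m hN hm1 hmN x0 hx0l hx0r hmod T hTsub hTc
  -- reflected set for the lower bound
  set ψ : ℕ → ℕ := fun k => (N - k) % N with hψ
  have hψinj : ∀ a ∈ T, ∀ b ∈ T, ψ a = ψ b → a = b := by
    intro a ha b hb h
    have ha' := mem_range.mp (hTsub ha)
    have hb' := mem_range.mp (hTsub hb)
    have h' : (N - a) % N = (N - b) % N := h
    rcases Nat.eq_zero_or_pos a with rfl | hapos
    · rcases Nat.eq_zero_or_pos b with rfl | hbpos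
      · rfl
      · rw [Nat.sub_zero, Nat.mod_self, Nat.mod_eq_of_lt (by omega)] at h'
        omega
    · rcases Nat.eq_zero_or_pos b with rfl | hbpos
      · rw [Nat.sub_zero, Nat.mod_self, Nat.mod_eq_of_lt (by omega)] at h'
        omega
      · rw [Nat.mod_eq_of_lt (by omega), Nat.mod_eq_of_lt (by omega)] at h'
        omega
  have hψval : ∀ k ∈ T, Real.sin (2*π*(ψ k)/N) = -Real.sin (2*π*k/N) := by
    intro k hk
    have hk' := mem_range.mp (hTsub hk)
    simp only [hψ]
    rcases Nat.eq_zero_or_pos k with rfl | hkpos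
    · rw [Nat.sub_zero, Nat.mod_self]
      norm_num
    · have h1 : (N - k) % N = N - k := Nat.mod_eq_of_lt (by omega)
      rw [h1]
      have h2 : ((N - k : ℕ) : ℝ) = (N:ℝ) - k := by
        push_cast [Nat.cast_sub (le_of_lt hk')]
        ring
      rw [show 2*π*((N-k:ℕ):ℝ)/N = -(2*π*(k:ℝ)/N) + ((1:ℤ):ℝ)*(2*π) by
        rw [h2]; field_simp; ring]
      rw [Real.sin_add_int_mul_two_pi, Real.sin_neg]
  set T' : Finset ℕ := T.image ψ with hT'
  have hT'sub : T' ⊆ range N := by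
    intro x hx
    simp only [hT', Finset.mem_image] at hx
    obtain ⟨k, _, rfl⟩ := hx
    simp only [hψ, mem_range]
    exact Nat.mod_lt _ (by omega)
  have hT'c : T'.card = m := by rw [hT', Finset.card_image_of_injOn hψinj, hTc]
  have hlow' : ∑ k ∈ T', Real.sin (2*π*k/N) ≤ _ :=
    aux_core N m hN hm1 hmN x0 hx0l hx0r hmod T' hT'sub hT'c
  have hsum2 : ∑ k ∈ T', Real.sin (2*π*k/N) = -∑ k ∈ T, Real.sin (2*π*k/N) := by
    rw [hT', Finset.sum_image hψinj, ← Finset.sum_neg_distrib]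
    exact Finset.sum_congr rfl hψval
  rw [hsum1, abs_le]
  constructor
  · rw [hsum2] at hlow'
    linarith
  · exact hup

lemma aux_final (N l m : ℕ) (hN : 2 ≤ N) (hgcd : Nat.gcd N l = 1)
    (hm1 : 1 ≤ m) (hmN : m ≤ N) (x0 : ℤ)
    (hx0l : -1 ≤ x0) (hx0r : x0 ≤ 2) (hmod : (x0 - 2*(m:ℤ) + 2 + N) % 4 = 0)
    (c : ℕ) (hc : 2*(c:ℤ) = N + x0 ∨ 2*(c:ℤ) = N - x0) :
    sInf {K : ℝ | 0 < K ∧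
        ((N.choose m : ℝ))⁻¹ * ∑ S ∈ (Finset.Icc 1 N).powersetCard m,
          Real.exp ((∑ n ∈ S, Real.sin (2 * Real.pi * n * l / N)) ^ 2 / K ^ 2) ≤ 2} ≤
      Real.sin (m * Real.pi / N) * Real.sin ((c : ℝ) * Real.pi / N) /
        (Real.sqrt (Real.log 2) * Real.sin (Real.pi / N)) := by
  have hNpos : (0:ℝ) < N := by
    have : (2:ℝ) ≤ N := by exact_mod_cast hN
    linarith
  have hNne : (N:ℝ) ≠ 0 := ne_of_gt hNpos
  have hN2 : (2:ℝ) ≤ N := by exact_mod_cast hN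
  have hpi := Real.pi_pos
  have hspos : 0 < Real.sin (π/N) := by
    apply Real.sin_pos_of_pos_of_lt_pi
    · positivity
    · rw [div_lt_iff₀ hNpos]
      nlinarith
  have hlog : 0 < Real.log 2 := Real.log_pos (by norm_num)
  have hsqlog : 0 < Real.sqrt (Real.log 2) := Real.sqrt_pos.mpr hlog
  set M : ℝ := Real.sin (m*π/N) * Real.cos (π*x0/(2*N)) / Real.sin (π/N) with hM
  have hcosnn : 0 ≤ Real.cos (π*x0/(2*N)) := by
    apply Real.cos_nonneg_of_mem_Icc
    constructor
    · rw [le_div_iff₀ (by positivity)]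
      have : (-1:ℝ) ≤ x0 := by exact_mod_cast hx0l
      nlinarith
    · rw [div_le_iff₀ (by positivity)]
      have : (x0:ℝ) ≤ 2 := by exact_mod_cast hx0r
      nlinarith
  have hsinmnn : 0 ≤ Real.sin (m*π/N) := by
    apply Real.sin_nonneg_of_nonneg_of_le_pi
    · positivity
    · rw [div_le_iff₀ hNpos]
      have : (m:ℝ) ≤ N := by exact_mod_cast hmN
      nlinarith
  have hMnn : 0 ≤ M := by positivity
  have hsinc : Real.sin ((c:ℝ)*π/N) = Real.cos (π*x0/(2*N)) := by
    rcases hc with hc | hc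
    · have hcr : 2*(c:ℝ) = N + x0 := by exact_mod_cast hc
      rw [show (c:ℝ)*π/N = π/2 - (-(π*x0/(2*N))) by
        field_simp
        linear_combination hcr]
      rw [Real.sin_pi_div_two_sub, Real.cos_neg]
    · have hcr : 2*(c:ℝ) = N - x0 := by exact_mod_cast hc
      rw [show (c:ℝ)*π/N = π/2 - π*x0/(2*N) by
        field_simp
        linear_combination hcr]
      rw [Real.sin_pi_div_two_sub]
  have hRHS : Real.sin (m * Real.pi / N) * Real.sin ((c : ℝ) * Real.pi / N) /
        (Real.sqrt (Real.log 2) * Real.sin (Real.pi / N)) = M / Real.sqrt (Real.log 2) := by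
    rw [hsinc, hM, div_div, mul_comm (Real.sin (π/N)) (Real.sqrt (Real.log 2))]
  rw [hRHS]
  have habs : ∀ S ∈ (Finset.Icc 1 N).powersetCard m,
      |∑ n ∈ S, Real.sin (2 * Real.pi * n * l / N)| ≤ M := by
    intro S hS
    obtain ⟨hS1, hS2⟩ := Finset.mem_powersetCard.mp hS
    exact aux_absBound N l m hN hgcd hm1 hmN x0 hx0l hx0r hmod S hS1 hS2
  have hbdd : BddBelow {K : ℝ | 0 < K ∧
      ((N.choose m : ℝ))⁻¹ * ∑ S ∈ (Finset.Icc 1 N).powersetCard m,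
        Real.exp ((∑ n ∈ S, Real.sin (2 * Real.pi * n * l / N)) ^ 2 / K ^ 2) ≤ 2} :=
    ⟨0, fun x hx => le_of_lt hx.1⟩
  have hcard : ((Finset.Icc 1 N).powersetCard m).card = N.choose m := by
    rw [Finset.card_powersetCard, Nat.card_Icc]
    norm_num
  have hchpos : (0:ℝ) < (N.choose m : ℝ) := by
    exact_mod_cast Nat.choose_pos hmN
  rcases eq_or_lt_of_le hMnn with hM0 | hMpos
  · -- M = 0 : every sum vanishes, every positive K works
    have hzero : ∀ S ∈ (Finset.Icc 1 N).powersetCard m,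
        (∑ n ∈ S, Real.sin (2 * Real.pi * n * l / N)) = 0 := by
      intro S hS
      have := habs S hS
      rw [← hM0] at this
      exact abs_eq_zero.mp (le_antisymm this (abs_nonneg _))
    have hmem : ∀ ε : ℝ, 0 < ε → ε ∈ {K : ℝ | 0 < K ∧
        ((N.choose m : ℝ))⁻¹ * ∑ S ∈ (Finset.Icc 1 N).powersetCard m,
          Real.exp ((∑ n ∈ S, Real.sin (2 * Real.pi * n * l / N)) ^ 2 / K ^ 2) ≤ 2} := by
      intro ε hε
      refine ⟨hε, ?_⟩
      have : ∀ S ∈ (Finset.Icc 1 N).powersetCard m,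
          Real.exp ((∑ n ∈ S, Real.sin (2 * Real.pi * n * l / N)) ^ 2 / ε ^ 2) = 1 := by
        intro S hS
        rw [hzero S hS]
        norm_num
      rw [Finset.sum_congr rfl this, Finset.sum_const, hcard]
      rw [nsmul_eq_mul, mul_one, inv_mul_cancel₀ (ne_of_gt hchpos)]
      norm_num
    have hle0 : sInf {K : ℝ | 0 < K ∧
        ((N.choose m : ℝ))⁻¹ * ∑ S ∈ (Finset.Icc 1 N).powersetCard m,
          Real.exp ((∑ n ∈ S, Real.sin (2 * Real.pi * n * l / N)) ^ 2 / K ^ 2) ≤ 2} ≤ 0 := by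
      apply le_of_forall_pos_le_add
      intro ε hε
      have := csInf_le hbdd (hmem ε hε)
      linarith
    rw [← hM0]
    simpa using hle0
  · -- M > 0 : the candidate K = M / sqrt (log 2) works
    apply csInf_le hbdd
    refine ⟨by positivity, ?_⟩
    set B : ℝ := M / Real.sqrt (Real.log 2) with hB
    have hBpos : 0 < B := by positivity
    have hB2 : B^2 = M^2 / Real.log 2 := by
      rw [hB, div_pow, Real.sq_sqrt hlog.le]
    have heach : ∀ S ∈ (Finset.Icc 1 N).powersetCard m,
        Real.exp ((∑ n ∈ S, Real.sin (2 * Real.pi * n * l / N)) ^ 2 / B ^ 2) ≤ 2 := by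
      intro S hS
      have h1 := habs S hS
      have h2 : (∑ n ∈ S, Real.sin (2 * Real.pi * n * l / N)) ^ 2 ≤ M^2 := by
        have := abs_le.mp h1
        nlinarith
      have h3 : (∑ n ∈ S, Real.sin (2 * Real.pi * n * l / N)) ^ 2 / B ^ 2 ≤ Real.log 2 := by
        rw [hB2, div_le_iff₀ (by positivity)]
        calc (∑ n ∈ S, Real.sin (2 * Real.pi * n * l / N)) ^ 2 ≤ M^2 := h2
          _ = Real.log 2 * (M^2 / Real.log 2) := by field_simp
      calc Real.exp ((∑ n ∈ S, Real.sin (2 * Real.pi * n * l / N)) ^ 2 / B ^ 2)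
          ≤ Real.exp (Real.log 2) := Real.exp_le_exp.mpr h3
        _ = 2 := Real.exp_log (by norm_num)
    calc ((N.choose m : ℝ))⁻¹ * ∑ S ∈ (Finset.Icc 1 N).powersetCard m,
          Real.exp ((∑ n ∈ S, Real.sin (2 * Real.pi * n * l / N)) ^ 2 / B ^ 2)
        ≤ ((N.choose m : ℝ))⁻¹ * (((Finset.Icc 1 N).powersetCard m).card • (2:ℝ)) := by
          apply mul_le_mul_of_nonneg_left _ (by positivity)
          exact Finset.sum_le_card_nsmul _ _ _ heach
      _ = 2 := by
          rw [hcard, nsmul_eq_mul]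
          field_simp

/-- Proposition 2.4, inequality (15). -/
theorem subGaussianNorm_V_refined (N l m : ℕ) (hN : 2 ≤ N) (hl1 : 1 ≤ l) (hl : l ≤ N - 1)
    (hm1 : 1 ≤ m) (hmN : m ≤ N) (hgcd : Nat.gcd N l = 1) :
    (Even m →
      sInf {K : ℝ | 0 < K ∧
          ((N.choose m : ℝ))⁻¹ * ∑ S ∈ (Finset.Icc 1 N).powersetCard m,
            Real.exp ((∑ n ∈ S, Real.sin (2 * Real.pi * n * l / N)) ^ 2 / K ^ 2) ≤ 2} ≤
        Real.sin (m * Real.pi / N) * Real.sin (((2 * (N / 4) + 1 : ℕ) : ℝ) * Real.pi / N) /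
          (Real.sqrt (Real.log 2) * Real.sin (Real.pi / N))) ∧
    (Odd m →
      sInf {K : ℝ | 0 < K ∧
          ((N.choose m : ℝ))⁻¹ * ∑ S ∈ (Finset.Icc 1 N).powersetCard m,
            Real.exp ((∑ n ∈ S, Real.sin (2 * Real.pi * n * l / N)) ^ 2 / K ^ 2) ≤ 2} ≤
        Real.sin (m * Real.pi / N) * Real.sin (((2 * ((N + 1) / 4) : ℕ) : ℝ) * Real.pi / N) /
          (Real.sqrt (Real.log 2) * Real.sin (Real.pi / N))) := by
  constructor
  · intro hme
    obtain ⟨a, ha⟩ := hme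
    exact aux_final N l m hN hgcd hm1 hmN (2 - ((N % 4 : ℕ) : ℤ))
      (by omega) (by omega) (by omega) (2*(N/4)+1) (by omega)
  · intro hmo
    obtain ⟨a, ha⟩ := hmo
    exact aux_final N l m hN hgcd hm1 hmN (2 - (((N+2) % 4 : ℕ) : ℤ))
      (by omega) (by omega) (by omega) (2*((N+1)/4)) (by omega)
end

section
/- Let N ≥ 2, l and m be positive integers with 1 ≤ l ≤ N−1 and 1 ≤ m ≤ N, and suppose gcd(N, l) = 1. Then ‖|X_l(m,N)|‖_{ψ₂} ≤ √2 · sin(mπ/N)/(√(ln 2) · sin(π/N)), where ‖|X_l(m,N)|‖_{ψ₂} = inf{K > 0 : C(N,m)^{−1} Σ_{S ⊆ {1,…,N}, |S|=m} exp(|Σ_{n∈S} exp(−2πi n l/N)|²/K²) ≤ 2}. -/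
open Real Finset intervalIntegral

lemma core_cos_sum (N m : ℕ) (hN : 2 ≤ N) (hm : m ≤ N) (θ : ℝ) (T : Finset ℕ)
    (hT : T ⊆ Finset.range N) (hcard : T.card = m) :
    ∑ a ∈ T, Real.cos (θ + 2 * π * a / N) ≤ Real.sin (m * π / N) / Real.sin (π / N) := by
  have hN0 : (0:ℝ) < N := by positivity
  have hπ : (0:ℝ) < π := Real.pi_pos
  have hs : 0 < Real.sin (π / N) := by
    apply Real.sin_pos_of_pos_of_lt_pi (by positivity)
    rw [div_lt_iff₀ hN0]
    have h2N : (2:ℝ) ≤ N := by exact_mod_cast hN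
    nlinarith
  set α := (m : ℝ) * π / N with hα
  have hα0 : 0 ≤ α := by positivity
  have hαπ : α ≤ π := by
    rw [hα, div_le_iff₀ hN0]
    have : (m:ℝ) ≤ N := by exact_mod_cast hm
    nlinarith
  set c := Real.cos α with hc
  set g : ℝ → ℝ := fun t => max (Real.cos t - c) 0 with hg
  have hgc : Continuous g := (Real.continuous_cos.sub continuous_const).max continuous_const
  have hg0 : ∀ t, 0 ≤ g t := fun t => le_max_right _ _
  set e : ℕ → ℝ := fun a => θ - π / N + a * (2 * π / N) with he
  have hestep : ∀ a : ℕ, e a ≤ e (a + 1) := by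
    intro a
    have h : (0:ℝ) < 2 * π / N := by positivity
    simp only [he]
    push_cast
    nlinarith [h]
  have key1 : ∀ a : ℕ, ∫ t in e a..e (a + 1), Real.cos t
      = 2 * Real.sin (π / N) * Real.cos (θ + 2 * π * a / N) := by
    intro a
    rw [integral_cos]
    have h1 : e (a + 1) = (θ + 2 * π * a / N) + π / N := by
      simp only [he]; push_cast; ring
    have h2 : e a = (θ + 2 * π * a / N) - π / N := by
      simp only [he]; push_cast; ring
    rw [h1, h2, Real.sin_add, Real.sin_sub]; ring
  have key2 : ∀ a : ℕ, ∫ t in e a..e (a + 1), Real.cos t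
      ≤ (∫ t in e a..e (a + 1), g t) + c * (2 * π / N) := by
    intro a
    have hint1 : IntervalIntegrable Real.cos MeasureTheory.volume (e a) (e (a+1)) :=
      Real.continuous_cos.intervalIntegrable _ _
    have hint2 : IntervalIntegrable (fun t => g t + c) MeasureTheory.volume (e a) (e (a+1)) :=
      (hgc.add continuous_const).intervalIntegrable _ _
    have hmono : ∫ t in e a..e (a + 1), Real.cos t ≤ ∫ t in e a..e (a + 1), (g t + c) := by
      apply intervalIntegral.integral_mono_on (hestep a) hint1 hint2
      intro x _
      have : Real.cos x - c ≤ g x := le_max_left _ _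
      linarith
    have hsplit : ∫ t in e a..e (a + 1), (g t + c)
        = (∫ t in e a..e (a + 1), g t) + c * (2 * π / N) := by
      rw [intervalIntegral.integral_add (hgc.intervalIntegrable _ _)
        (continuous_const.intervalIntegrable _ _), intervalIntegral.integral_const]
      have : e (a+1) - e a = 2 * π / N := by simp only [he]; push_cast; ring
      rw [this, smul_eq_mul]
      ring
    linarith [hsplit ▸ hmono]
  -- period integral of g
  have hper : Function.Periodic g (2 * π) := by
    intro t
    simp only [hg, Real.cos_add_two_pi]
  have hfull : ∑ a ∈ Finset.range N, ∫ t in e a..e (a + 1), g t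
      = ∫ t in (-π)..π, g t := by
    rw [intervalIntegral.sum_integral_adjacent_intervals
      (fun i _ => hgc.intervalIntegrable _ _)]
    have h0 : e 0 = θ - π / N := by simp [he]
    have hNe : e N = (θ - π / N) + 2 * π := by
      simp only [he]; field_simp
    rw [h0, hNe]
    have := hper.intervalIntegral_add_eq (θ - π / N) (-π)
    rw [this, show -π + 2 * π = π by ring]
  have hint_eval : ∫ t in (-π)..π, g t = 2 * Real.sin α - 2 * α * c := by
    have h1 : ∫ t in (-π)..(-α), g t = 0 := by
      rw [show (0:ℝ) = ∫ t in (-π)..(-α), (0:ℝ) by simp]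
      apply intervalIntegral.integral_congr
      intro x hx
      rw [Set.uIcc_of_le (by linarith)] at hx
      have hx1 := hx.1; have hx2 := hx.2
      have hcos : Real.cos x ≤ c := by
        rw [← Real.cos_neg x]
        exact Real.cos_le_cos_of_nonneg_of_le_pi hα0 (by linarith) (by linarith)
      simp only [hg]
      exact max_eq_right (by linarith)
    have h2 : ∫ t in α..π, g t = 0 := by
      rw [show (0:ℝ) = ∫ t in α..π, (0:ℝ) by simp]
      apply intervalIntegral.integral_congr
      intro x hx
      rw [Set.uIcc_of_le (by linarith)] at hx
      have hcos : Real.cos x ≤ c :=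
        Real.cos_le_cos_of_nonneg_of_le_pi hα0 hx.2 hx.1
      simp only [hg]
      exact max_eq_right (by linarith)
    have h3 : ∫ t in (-α)..α, g t = 2 * Real.sin α - 2 * α * c := by
      have : ∫ t in (-α)..α, g t = ∫ t in (-α)..α, (Real.cos t - c) := by
        apply intervalIntegral.integral_congr
        intro x hx
        rw [Set.uIcc_of_le (by linarith)] at hx
        have hcos : c ≤ Real.cos x := by
          rw [← Real.cos_abs x]
          apply Real.cos_le_cos_of_nonneg_of_le_pi (abs_nonneg x) hαπ
          rw [abs_le]; exact ⟨hx.1, hx.2⟩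
        simp only [hg]
        exact max_eq_left (by linarith)
      rw [this, intervalIntegral.integral_sub (Real.continuous_cos.intervalIntegrable _ _)
        (continuous_const.intervalIntegrable _ _), integral_cos,
        intervalIntegral.integral_const, Real.sin_neg, smul_eq_mul]
      ring
    have hsplit1 : (∫ t in (-π)..(-α), g t) + ∫ t in (-α)..α, g t = ∫ t in (-π)..α, g t :=
      intervalIntegral.integral_add_adjacent_intervals (hgc.intervalIntegrable _ _)
        (hgc.intervalIntegrable _ _)
    have hsplit2 : (∫ t in (-π)..α, g t) + ∫ t in α..π, g t = ∫ t in (-π)..π, g t :=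
      intervalIntegral.integral_add_adjacent_intervals (hgc.intervalIntegrable _ _)
        (hgc.intervalIntegrable _ _)
    rw [← hsplit2, ← hsplit1, h1, h2, h3]; ring
  -- assemble
  have hmain : 2 * Real.sin (π / N) * ∑ a ∈ T, Real.cos (θ + 2 * π * a / N)
      ≤ 2 * Real.sin α := by
    calc 2 * Real.sin (π / N) * ∑ a ∈ T, Real.cos (θ + 2 * π * a / N)
        = ∑ a ∈ T, ∫ t in e a..e (a + 1), Real.cos t := by
          rw [Finset.mul_sum]; exact Finset.sum_congr rfl fun a _ => (key1 a).symm
      _ ≤ ∑ a ∈ T, ((∫ t in e a..e (a + 1), g t) + c * (2 * π / N)) :=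
          Finset.sum_le_sum fun a _ => key2 a
      _ = (∑ a ∈ T, ∫ t in e a..e (a + 1), g t) + m * (c * (2 * π / N)) := by
          rw [Finset.sum_add_distrib, Finset.sum_const, hcard, nsmul_eq_mul]
      _ ≤ (∑ a ∈ Finset.range N, ∫ t in e a..e (a + 1), g t) + m * (c * (2 * π / N)) := by
          gcongr
          exact fun i _ _ => intervalIntegral.integral_nonneg (hestep i) (fun x _ => hg0 x)
      _ = (2 * Real.sin α - 2 * α * c) + m * (c * (2 * π / N)) := by
          rw [hfull, hint_eval]
      _ = 2 * Real.sin α := by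
          have : (m:ℝ) * (c * (2 * π / N)) = 2 * α * c := by
            rw [hα]; field_simp
          rw [this]; ring
  rw [le_div_iff₀ hs]
  rw [hα] at hmain
  linarith

lemma mod_inj_Icc {N n n' : ℕ} (hN : 2 ≤ N) (h1 : 1 ≤ n) (h1' : n ≤ N)
    (h2 : 1 ≤ n') (h2' : n' ≤ N) (h : n ≡ n' [MOD N]) : n = n' := by
  obtain ⟨k, hk⟩ := h.dvd
  have c1 : (1:ℤ) ≤ (n:ℤ) := by exact_mod_cast h1
  have c2 : (n:ℤ) ≤ N := by exact_mod_cast h1'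
  have c3 : (1:ℤ) ≤ (n':ℤ) := by exact_mod_cast h2
  have c4 : (n':ℤ) ≤ N := by exact_mod_cast h2'
  have c5 : (2:ℤ) ≤ N := by exact_mod_cast hN
  have : (n:ℤ) = n' := by
    rcases lt_trichotomy k 0 with hc | hc | hc
    · have : k ≤ -1 := by omega
      nlinarith
    · rw [hc] at hk; omega
    · have : 1 ≤ k := hc
      nlinarith
  exact_mod_cast this

lemma abs_sum_le (N l m : ℕ) (hN : 2 ≤ N) (hgcd : Nat.gcd N l = 1) (hm : m ≤ N)
    (S : Finset ℕ) (hS : S ⊆ Finset.Icc 1 N) (hcard : S.card = m) :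
    ‖(∑ n ∈ S, Complex.exp (-(2 * Real.pi * n * l / N : ℝ) * Complex.I))‖ ≤
      Real.sin (m * π / N) / Real.sin (π / N) := by
  have hN0 : (0:ℝ) < N := by positivity
  have hπ : (0:ℝ) < π := Real.pi_pos
  have hs : 0 < Real.sin (π / N) := by
    apply Real.sin_pos_of_pos_of_lt_pi (by positivity)
    rw [div_lt_iff₀ hN0]
    have h2N : (2:ℝ) ≤ N := by exact_mod_cast hN
    nlinarith
  have hsin : 0 ≤ Real.sin (m * π / N) := by
    apply Real.sin_nonneg_of_nonneg_of_le_pi (by positivity)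
    rw [div_le_iff₀ hN0]
    have : (m:ℝ) ≤ N := by exact_mod_cast hm
    nlinarith
  set X := ∑ n ∈ S, Complex.exp (-(2 * Real.pi * n * l / N : ℝ) * Complex.I) with hX
  by_cases hX0 : X = 0
  · rw [hX0]
    simpa using div_nonneg hsin hs.le
  · set φ := X.arg with hφ
    have habs : ((‖X‖ : ℝ) : ℂ) = Complex.exp (-(φ:ℂ) * Complex.I) * X := by
      conv_rhs => rw [← Complex.norm_mul_exp_arg_mul_I X]
      rw [← mul_assoc, mul_comm (Complex.exp _), mul_assoc, ← Complex.exp_add]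
      simp [hφ]
    have hre : ‖X‖ = ∑ n ∈ S, Real.cos (φ + 2 * π * n * l / N) := by
      have : ‖X‖ = (Complex.exp (-(φ:ℂ) * Complex.I) * X).re := by
        rw [← habs, Complex.ofReal_re]
      rw [this, hX, Finset.mul_sum, Complex.re_sum]
      apply Finset.sum_congr rfl
      intro n _
      rw [← Complex.exp_add,
        show -(φ:ℂ) * Complex.I + (-(2 * Real.pi * n * l / N : ℝ) : ℂ) * Complex.I
          = ((-(φ + 2 * π * n * l / N) : ℝ) : ℂ) * Complex.I by push_cast; ring,
        Complex.exp_ofReal_mul_I_re, Real.cos_neg]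
    have hmod : ∀ n : ℕ, Real.cos (φ + 2 * π * n * l / N)
        = Real.cos (φ + 2 * π * ((n * l) % N : ℕ) / N) := by
      intro n
      have hdm : (n * l : ℝ) = ((n * l) % N : ℕ) + N * ((n * l) / N : ℕ) := by
        exact_mod_cast (Nat.mod_add_div (n * l) N).symm
      have : φ + 2 * π * n * l / N
          = φ + 2 * π * ((n * l) % N : ℕ) / N + ((n * l) / N : ℕ) * (2 * π) := by
        field_simp
        nlinarith [hdm]
      rw [this, Real.cos_add_nat_mul_two_pi]
    rw [hre]
    have hre2 : ∑ n ∈ S, Real.cos (φ + 2 * π * n * l / N)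
        = ∑ a ∈ S.image (fun n => (n * l) % N), Real.cos (φ + 2 * π * a / N) := by
      rw [Finset.sum_image]
      · exact Finset.sum_congr rfl fun n _ => hmod n
      · intro n hn n' hn' h
        have h1 := Finset.mem_Icc.mp (hS hn)
        have h2 := Finset.mem_Icc.mp (hS hn')
        have hco : Nat.Coprime l N := (Nat.coprime_comm.mp hgcd)
        have : n ≡ n' [MOD N] := Nat.ModEq.cancel_right_of_coprime (by rwa [Nat.Coprime] at hco) h
        exact mod_inj_Icc hN h1.1 h1.2 h2.1 h2.2 this
    rw [hre2]
    apply core_cos_sum N m hN hm φ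
    · intro b hb
      rw [Finset.mem_range]
      obtain ⟨n, _, rfl⟩ := Finset.mem_image.mp hb
      exact Nat.mod_lt _ (by omega)
    · rw [Finset.card_image_of_injOn, hcard]
      intro n hn n' hn' h
      have h1 := Finset.mem_Icc.mp (hS hn)
      have h2 := Finset.mem_Icc.mp (hS hn')
      have hco : Nat.Coprime l N := (Nat.coprime_comm.mp hgcd)
      have : n ≡ n' [MOD N] := Nat.ModEq.cancel_right_of_coprime (by rwa [Nat.Coprime] at hco) h
      exact mod_inj_Icc hN h1.1 h1.2 h2.1 h2.2 this

set_option maxHeartbeats 2000000 in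
/-- Proposition 2.6: if `gcd(N,l) = 1` then
`‖|X_l(m,N)|‖_{ψ₂} ≤ √2·sin(mπ/N)/(√(ln 2)·sin(π/N))`. -/
theorem subGaussianNorm_X_refined (N l m : ℕ) (hN : 2 ≤ N) (hl1 : 1 ≤ l) (hl : l ≤ N - 1)
    (hm1 : 1 ≤ m) (hmN : m ≤ N) (hgcd : Nat.gcd N l = 1) :
    sInf {K : ℝ | 0 < K ∧
        ((N.choose m : ℝ))⁻¹ * ∑ S ∈ (Finset.Icc 1 N).powersetCard m,
          Real.exp ((‖(∑ n ∈ S,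
            Complex.exp (-(2 * Real.pi * n * l / N : ℝ) * Complex.I))‖) ^ 2 / K ^ 2) ≤ 2} ≤
      Real.sqrt 2 * Real.sin (m * Real.pi / N) /
        (Real.sqrt (Real.log 2) * Real.sin (Real.pi / N)) := by
  have hN0 : (0:ℝ) < N := by positivity
  have hπ : (0:ℝ) < π := Real.pi_pos
  have hs : 0 < Real.sin (π / N) := by
    apply Real.sin_pos_of_pos_of_lt_pi (by positivity)
    rw [div_lt_iff₀ hN0]
    have h2N : (2:ℝ) ≤ N := by exact_mod_cast hN
    nlinarith
  have hsin : 0 ≤ Real.sin (m * π / N) := by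
    apply Real.sin_nonneg_of_nonneg_of_le_pi (by positivity)
    rw [div_le_iff₀ hN0]
    have : (m:ℝ) ≤ N := by exact_mod_cast hmN
    nlinarith
  have hlog : 0 < Real.log 2 := Real.log_pos one_lt_two
  set M := Real.sin (m * π / N) / Real.sin (π / N) with hM
  have hM0 : 0 ≤ M := div_nonneg hsin hs.le
  have main : ∀ K : ℝ, 0 ≤ K → K ^ 2 * Real.log 2 = 2 * M ^ 2 →
      sInf {K : ℝ | 0 < K ∧
        ((N.choose m : ℝ))⁻¹ * ∑ S ∈ (Finset.Icc 1 N).powersetCard m,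
          Real.exp ((‖(∑ n ∈ S,
            Complex.exp (-(2 * Real.pi * n * l / N : ℝ) * Complex.I))‖) ^ 2 / K ^ 2) ≤ 2} ≤ K := by
    intro K hK0 hKsq
    have hchoose : (0:ℝ) < (N.choose m : ℝ) := by
      exact_mod_cast Nat.choose_pos hmN
    have hcardP : ((Finset.Icc 1 N).powersetCard m).card = N.choose m := by
      rw [Finset.card_powersetCard, Nat.card_Icc]
      simp
    have hsqrt2 : Real.sqrt 2 ≤ 2 := by
      nlinarith [Real.sq_sqrt (show (0:ℝ) ≤ 2 by norm_num), Real.sqrt_nonneg 2]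
    apply le_of_forall_pos_le_add
    intro ε hε
    apply csInf_le ⟨0, fun x hx => hx.1.le⟩
    refine ⟨by positivity, ?_⟩
    have hterm : ∀ S ∈ (Finset.Icc 1 N).powersetCard m,
        Real.exp ((‖(∑ n ∈ S,
          Complex.exp (-(2 * Real.pi * n * l / N : ℝ) * Complex.I))‖) ^ 2 / (K + ε) ^ 2)
          ≤ Real.sqrt 2 := by
      intro S hSmem
      obtain ⟨hSsub, hScard⟩ := Finset.mem_powersetCard.mp hSmem
      have habs := abs_sum_le N l m hN hgcd hmN S hSsub hScard
      set A := ‖(∑ n ∈ S,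
        Complex.exp (-(2 * Real.pi * n * l / N : ℝ) * Complex.I))‖ with hA
      have habs0 : 0 ≤ A := norm_nonneg _
      rw [← hM] at habs
      have hsq : A ^ 2 ≤ M ^ 2 := by nlinarith
      have hKe : (0:ℝ) < (K + ε) ^ 2 := by positivity
      have hMK : M ^ 2 ≤ (K + ε) ^ 2 * (Real.log 2 / 2) := by
        have h1 : K ^ 2 ≤ (K + ε) ^ 2 := by nlinarith
        nlinarith
      have harg : A ^ 2 / (K + ε) ^ 2 ≤ Real.log 2 / 2 := by
        rw [div_le_iff₀ hKe]
        nlinarith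
      calc Real.exp (A ^ 2 / (K + ε) ^ 2) ≤ Real.exp (Real.log 2 / 2) :=
            Real.exp_le_exp.mpr harg
        _ = Real.sqrt 2 := by
            rw [← Real.log_sqrt (by norm_num : (0:ℝ) ≤ 2),
              Real.exp_log (by positivity)]
    calc ((N.choose m : ℝ))⁻¹ * ∑ S ∈ (Finset.Icc 1 N).powersetCard m,
          Real.exp ((‖(∑ n ∈ S,
            Complex.exp (-(2 * Real.pi * n * l / N : ℝ) * Complex.I))‖) ^ 2 / (K + ε) ^ 2)
        ≤ ((N.choose m : ℝ))⁻¹ * (((Finset.Icc 1 N).powersetCard m).card • Real.sqrt 2) := by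
          apply mul_le_mul_of_nonneg_left _ (inv_nonneg.mpr hchoose.le)
          exact Finset.sum_le_card_nsmul _ _ _ hterm
      _ = Real.sqrt 2 := by
          rw [hcardP, nsmul_eq_mul, ← mul_assoc, inv_mul_cancel₀ (ne_of_gt hchoose), one_mul]
      _ ≤ 2 := hsqrt2
  apply main
  · apply div_nonneg (mul_nonneg (Real.sqrt_nonneg _) hsin)
      (mul_nonneg (Real.sqrt_nonneg _) hs.le)
  · rw [hM, div_pow, mul_pow, mul_pow, div_pow,
      Real.sq_sqrt (by norm_num : (0:ℝ) ≤ 2), Real.sq_sqrt hlog.le]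
    field_simp
end

section
/- Let N ≥ 2 and let m be an odd positive integer with 1 ≤ m ≤ ⌊N/2⌋. Then the maximum of Σ_{k∈S} cos(2πk/N), taken over all m-element subsets S of {0, 1, …, N−1}, equals sin(mπ/N)/sin(π/N). -/
open Real Finset


lemma cos_nat_sub (N j : ℕ) (hN : 0 < N) (hj : j ≤ N) :
    Real.cos (2 * π * ((N - j : ℕ) : ℝ) / N) = Real.cos (2 * π * j / N) := by
  have hN0 : (N : ℝ) ≠ 0 := by positivity
  have h1 : 2 * π * ((N - j : ℕ) : ℝ) / N = 2 * π - 2 * π * j / N := by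
    rw [Nat.cast_sub hj]; field_simp
  rw [h1, Real.cos_sub, Real.cos_two_pi, Real.sin_two_pi]; ring

lemma cos_aux1 (N a b : ℕ) (hN : 2 ≤ N) (h2b : 2 * b ≤ N) (hab : a ≤ b) :
    Real.cos (2 * π * b / N) ≤ Real.cos (2 * π * a / N) := by
  have hN0 : (0:ℝ) < N := by positivity
  apply Real.cos_le_cos_of_nonneg_of_le_pi
  · positivity
  · rw [div_le_iff₀ hN0]
    have : (2 * b : ℝ) ≤ N := by exact_mod_cast h2b
    nlinarith [Real.pi_pos]
  · have hab2 : (a:ℝ) ≤ b := by exact_mod_cast hab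
    gcongr

lemma cos_aux (N a b : ℕ) (hN : 2 ≤ N) (hb : b < N) (hab : a ≤ b) (hab' : a ≤ N - b) :
    Real.cos (2 * π * b / N) ≤ Real.cos (2 * π * a / N) := by
  by_cases h2b : 2 * b ≤ N
  · exact cos_aux1 N a b hN h2b hab
  · have hb1 : b ≤ N := hb.le
    have h1 : Real.cos (2 * π * (b:ℝ) / N) = Real.cos (2 * π * ((N - (N - b) : ℕ):ℝ) / N) := by
      congr 2
      rw [Nat.sub_sub_self hb1]
    rw [h1, cos_nat_sub N (N - b) (by omega) (by omega)]
    exact cos_aux1 N a (N - b) hN (by omega) hab'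

lemma dir (θ : ℝ) : ∀ t : ℕ,
    Real.sin θ * (1 + 2 * ∑ j ∈ Finset.range t, Real.cos ((2 * (j:ℝ) + 2) * θ))
      = Real.sin ((2 * (t:ℝ) + 1) * θ)
  | 0 => by norm_num
  | (t+1) => by
    rw [Finset.sum_range_succ]
    have ih := dir θ t
    have key : Real.sin ((2*(t:ℝ)+1) * θ) + 2 * Real.sin θ * Real.cos ((2*(t:ℝ)+2) * θ)
        = Real.sin ((2*(t:ℝ)+3) * θ) := by
      have h1 : (2*(t:ℝ)+1)*θ = (2*(t:ℝ)+2)*θ - θ := by ring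
      have h2 : (2*(t:ℝ)+3)*θ = (2*(t:ℝ)+2)*θ + θ := by ring
      rw [h1, h2, Real.sin_sub, Real.sin_add]; ring
    push_cast
    have h3 : (2*((t:ℝ)+1)+1)*θ = (2*(t:ℝ)+3)*θ := by ring
    rw [h3]
    linear_combination ih + key

lemma sum_le_sum_top (f : ℕ → ℝ) (n : ℕ) (c : ℝ) (T S : Finset ℕ)
    (hS : S ⊆ Finset.range n) (hcard : S.card = T.card)
    (hT' : ∀ k ∈ T, c ≤ f k) (hout : ∀ k ∈ Finset.range n, k ∉ T → f k ≤ c) :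
    ∑ k ∈ S, f k ≤ ∑ k ∈ T, f k := by
  have e1 := Finset.sum_inter_add_sum_sdiff S T f
  have e2 := Finset.sum_inter_add_sum_sdiff T S f
  have c1 := Finset.card_inter_add_card_sdiff S T
  have c2 := Finset.card_inter_add_card_sdiff T S
  have h3 : (S ∩ T).card = (T ∩ S).card := by rw [Finset.inter_comm]
  have hc1 : (S \ T).card = (T \ S).card := by omega
  have hA : ∑ k ∈ S \ T, f k ≤ (S \ T).card • c :=
    Finset.sum_le_card_nsmul _ _ _ (fun x hx =>
      hout x (hS (Finset.mem_sdiff.1 hx).1) (Finset.mem_sdiff.1 hx).2)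
  have hB : (T \ S).card • c ≤ ∑ k ∈ T \ S, f k :=
    Finset.card_nsmul_le_sum _ _ _ (fun x hx => hT' x (Finset.mem_sdiff.1 hx).1)
  have hEq : ∑ k ∈ S ∩ T, f k = ∑ k ∈ T ∩ S, f k := by rw [Finset.inter_comm]
  rw [hc1] at hA
  linarith

/-- For `N ≥ 2` and odd `m` with `1 ≤ m ≤ ⌊N/2⌋`, the maximum of
`Σ_{k∈S} cos(2πk/N)` over `m`-element subsets `S ⊆ {0,…,N-1}` is `sin(mπ/N)/sin(π/N)`. -/
theorem max_cos_sum_odd (N m : ℕ) (hN : 2 ≤ N) (hm : Odd m) (hm1 : 1 ≤ m) (hmN : m ≤ N / 2) :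
    IsGreatest {x : ℝ | ∃ S ∈ (Finset.range N).powersetCard m,
        x = ∑ k ∈ S, Real.cos (2 * Real.pi * k / N)}
      (Real.sin (m * Real.pi / N) / Real.sin (Real.pi / N)) := by
  obtain ⟨t, ht⟩ := hm
  have h4t : 4 * t + 2 ≤ N := by
    have := (Nat.le_div_iff_mul_le (by norm_num : 0 < 2)).1 hmN
    omega
  have hN0 : (0:ℝ) < N := by positivity
  have hNne : (N:ℝ) ≠ 0 := hN0.ne'
  set f : ℕ → ℝ := fun k => Real.cos (2 * π * k / N) with hf
  set T : Finset ℕ := Finset.range (t+1) ∪ (Finset.range t).image (fun j => N - (j+1)) with hTdef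
  -- basic facts about T
  have hdisj : Disjoint (Finset.range (t+1)) ((Finset.range t).image (fun j => N - (j+1))) := by
    rw [Finset.disjoint_left]
    intro a ha hb
    rw [Finset.mem_range] at ha
    rw [Finset.mem_image] at hb
    obtain ⟨j, hj, hj2⟩ := hb
    rw [Finset.mem_range] at hj
    omega
  have hinj : Set.InjOn (fun j => N - (j+1)) (Finset.range t) := by
    intro a ha b hb hab
    simp only [Finset.coe_range, Set.mem_Iio] at ha hb
    simp only at hab
    omega
  have hTcard : T.card = m := by
    rw [hTdef, Finset.card_union_of_disjoint hdisj, Finset.card_image_of_injOn hinj,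
      Finset.card_range, Finset.card_range]
    omega
  have hTsub : T ⊆ Finset.range N := by
    intro k hk
    rw [hTdef, Finset.mem_union, Finset.mem_range, Finset.mem_image] at hk
    rw [Finset.mem_range]
    rcases hk with h | ⟨j, hj, hj2⟩
    · omega
    · rw [Finset.mem_range] at hj; omega
  -- value of the sum over T
  have hsin : 0 < Real.sin (π / N) := by
    apply Real.sin_pos_of_pos_of_lt_pi
    · positivity
    · exact div_lt_self Real.pi_pos (by exact_mod_cast hN.trans_lt' one_lt_two)
  have hsum : ∑ k ∈ T, f k = Real.sin (m * π / N) / Real.sin (π / N) := by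
    rw [hTdef, Finset.sum_union hdisj, Finset.sum_image hinj]
    have h1 : ∀ j ∈ Finset.range t, f (N - (j+1)) = Real.cos ((2 * (j:ℝ) + 2) * (π / N)) := by
      intro j hj
      rw [Finset.mem_range] at hj
      show Real.cos (2 * π * ((N - (j+1) : ℕ):ℝ) / N) = _
      rw [cos_nat_sub N (j+1) (by omega) (by omega)]
      congr 1
      push_cast
      field_simp
    have h2 : ∀ j ∈ Finset.range t, f (j+1) = Real.cos ((2 * (j:ℝ) + 2) * (π / N)) := by
      intro j hj
      show Real.cos (2 * π * ((j+1 : ℕ):ℝ) / N) = _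
      congr 1
      push_cast
      field_simp
    rw [Finset.sum_congr rfl h1, Finset.sum_range_succ', Finset.sum_congr rfl h2]
    have h0 : f 0 = 1 := by
      show Real.cos (2 * π * (0:ℕ) / N) = 1
      norm_num
    rw [h0]
    have hd := dir (π / N) t
    rw [eq_div_iff hsin.ne']
    have harg : ((m:ℝ) * π / N) = (2 * (t:ℝ) + 1) * (π / N) := by
      rw [ht]; push_cast; field_simp
    rw [harg, ← hd]
    ring
  constructor
  · exact ⟨T, Finset.mem_powersetCard.2 ⟨hTsub, hTcard⟩, hsum.symm⟩
  · rintro x ⟨S, hS, rfl⟩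
    rw [Finset.mem_powersetCard] at hS
    rw [← hsum]
    have hT' : ∀ k ∈ T, Real.cos (2 * π * t / N) ≤ f k := by
      intro k hk
      rw [hTdef, Finset.mem_union, Finset.mem_range, Finset.mem_image] at hk
      rcases hk with h | ⟨j, hj, hj2⟩
      · exact cos_aux N k t hN (by omega) (by omega) (by omega)
      · rw [Finset.mem_range] at hj
        subst hj2
        show _ ≤ Real.cos (2 * π * ((N - (j+1) : ℕ):ℝ) / N)
        rw [cos_nat_sub N (j+1) (by omega) (by omega)]
        exact cos_aux N (j+1) t hN (by omega) (by omega) (by omega)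
    have hout : ∀ k ∈ Finset.range N, k ∉ T → f k ≤ Real.cos (2 * π * t / N) := by
      intro k hk hkT
      rw [Finset.mem_range] at hk
      rw [hTdef, Finset.mem_union, Finset.mem_range, Finset.mem_image] at hkT
      push_neg at hkT
      obtain ⟨hk1, hk2⟩ := hkT
      have hk3 : k < N - t := by
        by_contra h
        exact hk2 (N - 1 - k) (by rw [Finset.mem_range]; omega) (by omega)
      exact cos_aux N t k hN (by omega) (by omega) (by omega)
    exact sum_le_sum_top f N (Real.cos (2 * π * t / N)) T S hS.1
      (hS.2.trans hTcard.symm) hT' hout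
end

section
/- Let N ≥ 2 be an even integer and let m be an odd positive integer with 1 ≤ m ≤ N/2. Then the minimum of Σ_{k∈S} cos(2πk/N), taken over all m-element subsets S of {0, 1, …, N−1}, equals −sin(mπ/N)/sin(π/N). -/
open Real Finset

/-- Dirichlet-type telescoping sum. -/
lemma dir_sum (θ x : ℝ) (n : ℕ) :
    2 * Real.sin (θ/2) * ∑ i ∈ Finset.range n, Real.cos (x + i * θ)
      = Real.sin (x + n * θ - θ/2) - Real.sin (x - θ/2) := by
  induction n with
  | zero => simp
  | succ n ih =>
    rw [Finset.sum_range_succ, mul_add, ih]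
    have h : 2 * Real.sin (θ/2) * Real.cos (x + n * θ)
        = Real.sin (x + (n+1 : ℕ) * θ - θ/2) - Real.sin (x + n * θ - θ/2) := by
      push_cast
      have h1 : x + (n+1 : ℝ) * θ - θ/2 = (x + n*θ) + θ/2 := by ring
      have h2 : x + (n:ℝ) * θ - θ/2 = (x + n*θ) - θ/2 := by ring
      rw [h1, h2, Real.sin_add, Real.sin_sub]
      ring
    rw [h]; ring

/-- Exchange lemma: sum over a set of smallest values is the least. -/
lemma exchange_le {A B S : Finset ℕ} {f : ℕ → ℝ} (hB : B ⊆ A) (hS : S ⊆ A)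
    (hcard : S.card = B.card)
    (hmin : ∀ b ∈ B, ∀ a ∈ A, a ∉ B → f b ≤ f a) :
    ∑ b ∈ B, f b ≤ ∑ s ∈ S, f s := by
  have hBsplit : ∑ b ∈ B, f b = ∑ b ∈ B ∩ S, f b + ∑ b ∈ B \ S, f b := by
    rw [Finset.sum_inter_add_sum_sdiff]
  have hSsplit : ∑ s ∈ S, f s = ∑ s ∈ B ∩ S, f s + ∑ s ∈ S \ B, f s := by
    rw [Finset.inter_comm, Finset.sum_inter_add_sum_sdiff]
  have hcards : (B \ S).card = (S \ B).card := by
    have h1 := Finset.card_inter_add_card_sdiff B S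
    have h2 := Finset.card_inter_add_card_sdiff S B
    rw [Finset.inter_comm] at h2
    omega
  rw [hBsplit, hSsplit]
  apply add_le_add le_rfl
  rcases Finset.eq_empty_or_nonempty (B \ S) with h | h
  · have : (S \ B) = ∅ := Finset.card_eq_zero.mp (by rw [← hcards, h]; simp)
    rw [h, this]
  · obtain ⟨b₀, hb₀mem, hb₀⟩ := Finset.exists_mem_eq_sup' h f
    have hb₀B : b₀ ∈ B := (Finset.mem_sdiff.mp hb₀mem).1
    calc ∑ b ∈ B \ S, f b ≤ (B \ S).card • f b₀ := by
          apply Finset.sum_le_card_nsmul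
          intro x hx
          rw [← hb₀]
          exact Finset.le_sup' f hx
      _ = (S \ B).card • f b₀ := by rw [hcards]
      _ ≤ ∑ s ∈ S \ B, f s := by
          apply Finset.card_nsmul_le_sum
          intro a ha
          rcases Finset.mem_sdiff.mp ha with ⟨haS, haB⟩
          exact hmin b₀ hb₀B a (hS haS) haB

/-- For even `N ≥ 2` and odd `m` with `1 ≤ m ≤ N/2`, the minimum of
`Σ_{k∈S} cos(2πk/N)` over `m`-element subsets `S ⊆ {0,…,N-1}` is `-sin(mπ/N)/sin(π/N)`. -/
theorem min_cos_sum_odd_even (N m : ℕ) (hN : 2 ≤ N) (hNe : Even N)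
    (hm : Odd m) (hm1 : 1 ≤ m) (hmN : m ≤ N / 2) :
    IsLeast {x : ℝ | ∃ S ∈ (Finset.range N).powersetCard m,
        x = ∑ k ∈ S, Real.cos (2 * Real.pi * k / N)}
      (-(Real.sin (m * Real.pi / N) / Real.sin (Real.pi / N))) := by
  obtain ⟨c, hc⟩ := hNe
  obtain ⟨t, ht⟩ := hm
  have hcN : N = 2 * c := by omega
  have htc : t < c := by omega
  have hc1 : 1 ≤ c := by omega
  -- the minimizing set
  set B : Finset ℕ := Finset.Ico (c - t) (c + t + 1) with hBdef
  have hBsub : B ⊆ Finset.range N := by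
    intro k hk
    rw [Finset.mem_Ico] at hk
    rw [Finset.mem_range]
    omega
  have hBcard : B.card = m := by
    rw [hBdef, Nat.card_Ico]; omega
  -- real facts
  have hNpos : (0:ℝ) < N := by positivity
  have hNR : (N:ℝ) = 2 * c := by exact_mod_cast congrArg Nat.cast hcN
  have hsinpos : 0 < Real.sin (π / N) := by
    apply Real.sin_pos_of_pos_of_lt_pi
    · positivity
    · rw [div_lt_iff₀ hNpos]
      have h2 : (2:ℝ) ≤ (N:ℝ) := by exact_mod_cast hN
      nlinarith [Real.pi_pos]
  -- sum over B
  have hBsum : ∑ k ∈ B, Real.cos (2 * π * k / N)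
      = -(Real.sin (m * π / N) / Real.sin (π / N)) := by
    rw [hBdef, Finset.sum_Ico_eq_sum_range]
    have hcount : c + t + 1 - (c - t) = m := by omega
    rw [hcount]
    set x : ℝ := 2 * π * (c - t : ℕ) / N with hx
    set θ : ℝ := 2 * π / N with hθ
    have hterm : ∀ i ∈ Finset.range m,
        Real.cos (2 * π * ((c - t) + i : ℕ) / N) = Real.cos (x + i * θ) := by
      intro i _
      congr 1
      rw [hx, hθ]
      push_cast
      ring
    rw [Finset.sum_congr rfl hterm]
    have hkey := dir_sum θ x m
    have hct : ((c - t : ℕ) : ℝ) = (c : ℝ) - t := Nat.cast_sub (le_of_lt htc)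
    have hθ2 : θ / 2 = π / N := by rw [hθ]; ring
    have harg1 : x + m * θ - θ/2 = π + m * π / N := by
      rw [hx, hθ, hct]
      have hmR : (m : ℝ) = 2 * t + 1 := by exact_mod_cast congrArg Nat.cast ht
      field_simp
      rw [hmR, hNR]
      ring
    have harg2 : x - θ/2 = π - m * π / N := by
      rw [hx, hθ, hct]
      have hmR : (m : ℝ) = 2 * t + 1 := by exact_mod_cast congrArg Nat.cast ht
      field_simp
      rw [hmR, hNR]
      ring
    rw [harg1, harg2, hθ2] at hkey
    have h1 : Real.sin (π + m * π / N) = - Real.sin (m * π / N) := by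
      rw [add_comm, Real.sin_add_pi]
    have h2 : Real.sin (π - m * π / N) = Real.sin (m * π / N) := Real.sin_pi_sub _
    rw [h1, h2] at hkey
    have hne : Real.sin (π / N) ≠ 0 := ne_of_gt hsinpos
    field_simp
    linarith [hkey]
  constructor
  · exact ⟨B, Finset.mem_powersetCard.mpr ⟨hBsub, hBcard⟩, hBsum.symm⟩
  · rintro x ⟨S, hSmem, rfl⟩
    obtain ⟨hSsub, hScard⟩ := Finset.mem_powersetCard.mp hSmem
    rw [← hBsum]
    apply exchange_le hBsub hSsub (by rw [hScard, hBcard])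
    -- minimality of values on B
    intro b hb a ha haB
    rw [Finset.mem_Ico] at hb
    rw [Finset.mem_range] at ha
    have haB' : a < c - t ∨ c + t + 1 ≤ a := by
      rw [hBdef, Finset.mem_Ico] at haB
      omega
    have hπ := Real.pi_pos
    -- rewrite cos values via distance from c
    have hform : ∀ k : ℕ, Real.cos (2 * π * k / N) = - Real.cos (|2 * π * k / N - π|) := by
      intro k
      rw [Real.cos_abs, Real.cos_sub_pi, neg_neg]
    rw [hform b, hform a]
    have hdist : ∀ k : ℕ, |2 * π * k / N - π| = (2 * π / N) * |(k : ℝ) - c| := by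
      intro k
      rw [← abs_of_pos (show (0:ℝ) < 2 * π / N by positivity), ← abs_mul]
      congr 1
      rw [hNR]
      field_simp
    rw [hdist b, hdist a]
    have hfac : (0:ℝ) < 2 * π / N := by positivity
    have hbb : |(b : ℝ) - c| ≤ t := by
      rw [abs_le]
      have h1 : ((c - t : ℕ) : ℝ) ≤ b := by exact_mod_cast Nat.cast_le.mpr hb.1
      have h2 : (b : ℝ) ≤ c + t := by exact_mod_cast Nat.cast_le.mpr (by omega : b ≤ c + t)
      have h3 : ((c - t : ℕ) : ℝ) = (c:ℝ) - t := Nat.cast_sub (le_of_lt htc)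
      constructor <;> [linarith [h3 ▸ h1]; linarith]
    have haa1 : (t : ℝ) + 1 ≤ |(a : ℝ) - c| := by
      rcases haB' with h | h
      · have : (a : ℝ) + (t + 1) ≤ c := by exact_mod_cast Nat.cast_le.mpr (by omega : a + (t+1) ≤ c)
        rw [abs_sub_comm, abs_of_nonneg (by linarith)]
        linarith
      · have : (c : ℝ) + t + 1 ≤ a := by exact_mod_cast Nat.cast_le.mpr (by omega : c + t + 1 ≤ a)
        rw [abs_of_nonneg (by linarith)]
        linarith
    have haa2 : |(a : ℝ) - c| ≤ c := by
      rw [abs_le]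
      have h4 : (a : ℝ) + 1 ≤ 2 * c := by exact_mod_cast (by omega : a + 1 ≤ 2 * c)
      have h5 : (0:ℝ) ≤ a := Nat.cast_nonneg a
      constructor <;> linarith
    have hle : (2 * π / N) * |(b : ℝ) - c| ≤ (2 * π / N) * |(a : ℝ) - c| := by
      apply mul_le_mul_of_nonneg_left _ (le_of_lt hfac)
      linarith
    have hupper : (2 * π / N) * |(a : ℝ) - c| ≤ π := by
      calc (2 * π / N) * |(a : ℝ) - c| ≤ (2 * π / N) * c := by
            apply mul_le_mul_of_nonneg_left haa2 (le_of_lt hfac)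
        _ = π := by rw [hNR]; field_simp
    have := Real.cos_le_cos_of_nonneg_of_le_pi
      (mul_nonneg (le_of_lt hfac) (abs_nonneg _)) hupper hle
    linarith
end

section
/- Let N ≥ 3 be an odd integer and let m be an odd positive integer with 1 ≤ m ≤ ⌊N/2⌋. Then the minimum of Σ_{k∈S} cos(2πk/N), taken over all m-element subsets S of {0, 1, …, N−1}, equals −sin(mπ/N)·cos(π/N)/sin(π/N). -/
open Real Finset

private lemma sum_swap_aux (u s t : Finset ℕ) (f : ℕ → ℝ) (hs : s ⊆ u)
    (hc : s.card = t.card) (h : ∀ x ∈ t, ∀ y ∈ u, y ∉ t → f x ≤ f y) :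
    ∑ x ∈ t, f x ≤ ∑ x ∈ s, f x := by
  have h1 : (t \ s).card = (s \ t).card := (Finset.card_sdiff_comm hc).symm
  let e := Finset.equivOfCardEq h1
  have key : ∑ x ∈ t \ s, f x ≤ ∑ y ∈ s \ t, f y := by
    rw [← Finset.sum_coe_sort (t \ s) f, ← Finset.sum_coe_sort (s \ t) f,
      ← Equiv.sum_comp e (fun y : ((s \ t : Finset ℕ) : Type) => f (y : ℕ))]
    apply Finset.sum_le_sum
    intro i _
    have hx : (i : ℕ) ∈ t := (Finset.mem_sdiff.mp i.2).1
    have hy := (e i).2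
    rw [Finset.mem_sdiff] at hy
    exact h i hx (e i) (hs hy.1) hy.2
  calc ∑ x ∈ t, f x = ∑ x ∈ t ∩ s, f x + ∑ x ∈ t \ s, f x :=
        (Finset.sum_inter_add_sum_sdiff t s f).symm
    _ ≤ ∑ x ∈ t ∩ s, f x + ∑ x ∈ s \ t, f x := by linarith
    _ = ∑ x ∈ s ∩ t, f x + ∑ x ∈ s \ t, f x := by rw [Finset.inter_comm]
    _ = ∑ x ∈ s, f x := Finset.sum_inter_add_sum_sdiff s t f

private lemma cos_eq_aux (N k : ℕ) (hN0 : (N:ℝ) ≠ 0) :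
    Real.cos (2 * Real.pi * k / N) = -Real.cos (|(N:ℝ) - 2 * k| * Real.pi / N) := by
  rw [show |(N:ℝ) - 2*k| * Real.pi / N = |((N:ℝ) - 2*k) * Real.pi / N| by
      rw [abs_div, abs_mul, abs_of_nonneg Real.pi_pos.le, Nat.abs_cast],
    Real.cos_abs,
    show ((N:ℝ) - 2*k) * Real.pi / N = Real.pi - 2*Real.pi*k/N by field_simp,
    Real.cos_pi_sub]
  ring

/-- For odd `N ≥ 3` and odd `m` with `1 ≤ m ≤ ⌊N/2⌋`, the minimum of
`Σ_{k∈S} cos(2πk/N)` over `m`-element subsets `S ⊆ {0,…,N-1}` is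
`-sin(mπ/N)·cos(π/N)/sin(π/N)`. -/
theorem min_cos_sum_odd_odd (N m : ℕ) (hN : 3 ≤ N) (hNo : Odd N)
    (hm : Odd m) (hm1 : 1 ≤ m) (hmN : m ≤ N / 2) :
    IsLeast {x : ℝ | ∃ S ∈ (Finset.range N).powersetCard m,
        x = ∑ k ∈ S, Real.cos (2 * Real.pi * k / N)}
      (-(Real.sin (m * Real.pi / N) * Real.cos (Real.pi / N) / Real.sin (Real.pi / N))) := by
  obtain ⟨p, hp⟩ := hNo
  obtain ⟨q, hq⟩ := hm
  have hmN' : m ≤ N := le_trans hmN (Nat.div_le_self N 2)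
  set a : ℕ := (N - m) / 2 with ha
  have ha2 : 2 * a = N - m := by omega
  have hNpos : (0:ℝ) < N := by
    have : 0 < N := by omega
    exact_mod_cast this
  have hN0 : (N:ℝ) ≠ 0 := hNpos.ne'
  have hN2a : (2:ℝ) * a = (N:ℝ) - m := by
    zify [hmN'] at ha2
    exact_mod_cast ha2
  have hpiN : 0 < Real.pi / N := by positivity
  have hpiN' : Real.pi / N < Real.pi := by
    apply div_lt_self Real.pi_pos
    exact_mod_cast by omega
  have hsp : 0 < Real.sin (Real.pi / N) := Real.sin_pos_of_pos_of_lt_pi hpiN hpiN'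
  set T := Finset.Ico a (a + m) with hT
  have hsub : T ⊆ Finset.range N := by
    intro x hx
    simp only [hT, Finset.mem_Ico] at hx
    simp only [Finset.mem_range]
    omega
  have hcard : T.card = m := by simp [hT]
  -- the sum over T
  have hsum : ∑ k ∈ T, Real.cos (2 * Real.pi * k / N)
      = -(Real.sin (m * Real.pi / N) * Real.cos (Real.pi / N) / Real.sin (Real.pi / N)) := by
    have h1 : ∑ k ∈ T, Real.cos (2 * Real.pi * (k:ℝ) / N)
        = ∑ i ∈ Finset.range m, Real.cos (2 * Real.pi * ((a:ℝ) + i) / N) := by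
      rw [hT, Finset.sum_Ico_eq_sum_range, Nat.add_sub_cancel_left]
      apply Finset.sum_congr rfl
      intro i _
      push_cast
      ring_nf
    set g : ℕ → ℝ := fun i => Real.sin ((2 * ((a:ℝ) + i) - 1) * Real.pi / N) with hgdef
    have htel : ∑ i ∈ Finset.range m, (g (i+1) - g i) = g m - g 0 := Finset.sum_range_sub g m
    have hterm : ∀ i : ℕ, g (i+1) - g i
        = 2 * Real.sin (Real.pi / N) * Real.cos (2 * Real.pi * ((a:ℝ) + i) / N) := by
      intro i
      simp only [hgdef]
      push_cast
      rw [show (2*((a:ℝ)+((i:ℝ)+1))-1)*Real.pi/N = 2*Real.pi*((a:ℝ)+i)/N + Real.pi/N by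
          field_simp; ring,
        show (2*((a:ℝ)+(i:ℝ))-1)*Real.pi/N = 2*Real.pi*((a:ℝ)+i)/N - Real.pi/N by
          field_simp,
        Real.sin_add, Real.sin_sub]
      ring
    have h2 : 2 * Real.sin (Real.pi / N) *
        ∑ i ∈ Finset.range m, Real.cos (2 * Real.pi * ((a:ℝ) + i) / N) = g m - g 0 := by
      rw [Finset.mul_sum, ← htel]
      exact Finset.sum_congr rfl fun i _ => (hterm i).symm
    have hgm : g m = -Real.sin (((m:ℝ) - 1) * Real.pi / N) := by
      simp only [hgdef]
      rw [show (2*((a:ℝ)+(m:ℝ))-1)*Real.pi/N = Real.pi + ((m:ℝ)-1)*Real.pi/N by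
        field_simp
        linear_combination hN2a]
      simp [Real.sin_add]
    have hg0 : g 0 = Real.sin (((m:ℝ) + 1) * Real.pi / N) := by
      simp only [hgdef]
      push_cast
      rw [show (2*((a:ℝ)+0)-1)*Real.pi/N = Real.pi - ((m:ℝ)+1)*Real.pi/N by
        field_simp
        linear_combination hN2a]
      rw [Real.sin_pi_sub]
    have h3 : g m - g 0 = -(2 * Real.sin ((m:ℝ) * Real.pi / N) * Real.cos (Real.pi / N)) := by
      rw [hgm, hg0,
        show ((m:ℝ)-1)*Real.pi/N = (m:ℝ)*Real.pi/N - Real.pi/N by ring,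
        show ((m:ℝ)+1)*Real.pi/N = (m:ℝ)*Real.pi/N + Real.pi/N by ring,
        Real.sin_sub, Real.sin_add]
      ring
    have h5 : ∑ i ∈ Finset.range m, Real.cos (2 * Real.pi * ((a:ℝ) + i) / N)
        = (g m - g 0) / (2 * Real.sin (Real.pi / N)) := by
      rw [eq_div_iff (by positivity)]
      linear_combination h2
    rw [h1, h5, h3]
    field_simp
  constructor
  · exact ⟨T, Finset.mem_powersetCard.mpr ⟨hsub, hcard⟩, hsum.symm⟩
  · rintro x ⟨S, hS, rfl⟩
    rw [Finset.mem_powersetCard] at hS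
    rw [← hsum]
    apply sum_swap_aux (Finset.range N) S T _ hS.1 (hS.2.trans hcard.symm)
    intro x hx y hy hyT
    simp only [hT, Finset.mem_Ico] at hx
    rw [Finset.mem_range] at hy
    have hyT' : y < a ∨ a + m ≤ y := by
      simp only [hT, Finset.mem_Ico] at hyT
      omega
    have hxi : |(N:ℤ) - 2 * x| ≤ (m:ℤ) := by
      rw [abs_le]; constructor <;> omega
    have hyi : (m:ℤ) ≤ |(N:ℤ) - 2 * y| := by
      rcases hyT' with h | h
      · exact le_abs.mpr (Or.inl (by omega))
      · exact le_abs.mpr (Or.inr (by omega))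
    have hyNi : |(N:ℤ) - 2 * y| ≤ (N:ℤ) := by
      rw [abs_le]; constructor <;> omega
    have hxr : |(N:ℝ) - 2 * x| ≤ (m:ℝ) := by exact_mod_cast hxi
    have hyr : (m:ℝ) ≤ |(N:ℝ) - 2 * y| := by exact_mod_cast hyi
    have hyNr : |(N:ℝ) - 2 * y| ≤ (N:ℝ) := by exact_mod_cast hyNi
    rw [cos_eq_aux N x hN0, cos_eq_aux N y hN0]
    apply neg_le_neg
    apply Real.cos_le_cos_of_nonneg_of_le_pi
    · positivity
    · rw [div_le_iff₀ hNpos]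
      nlinarith [Real.pi_pos]
    · rw [div_le_div_iff_of_pos_right hNpos]
      exact mul_le_mul_of_nonneg_right (hxr.trans hyr) Real.pi_pos.le
end

section
/- Let N ≥ 2 and let m be an even positive integer with 2 ≤ m ≤ ⌊N/2⌋. Then the maximum of Σ_{k∈S} cos(2πk/N), taken over all m-element subsets S of {0, 1, …, N−1}, equals sin(mπ/N)·cos(π/N)/sin(π/N). -/
open Real Finset

private lemma cos_step (N : ℕ) (j : ℕ) :
    2 * Real.sin (π / N) * Real.cos (2 * π * j / N)
      = Real.sin ((2 * (j : ℝ) + 1) * π / N) - Real.sin ((2 * (j : ℝ) - 1) * π / N) := by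
  rw [Real.sin_sub_sin]
  have h1 : ((2 * (j:ℝ) + 1) * π / N - (2 * (j:ℝ) - 1) * π / N) / 2 = π / N := by ring
  have h2 : ((2 * (j:ℝ) + 1) * π / N + (2 * (j:ℝ) - 1) * π / N) / 2 = 2 * π * j / N := by ring
  rw [h1, h2]

private lemma cos_sum_range (N n : ℕ) :
    2 * Real.sin (π / N) * ∑ j ∈ Finset.range n, Real.cos (2 * π * j / N)
      = Real.sin ((2 * (n : ℝ) - 1) * π / N) + Real.sin (π / N) := by
  rw [Finset.mul_sum]
  have h : ∀ j ∈ Finset.range n, 2 * Real.sin (π / N) * Real.cos (2 * π * j / N)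
      = (fun j : ℕ => Real.sin ((2 * (j : ℝ) - 1) * π / N)) (j + 1)
        - (fun j : ℕ => Real.sin ((2 * (j : ℝ) - 1) * π / N)) j := by
    intro j _
    simp only
    rw [cos_step]
    push_cast
    ring_nf
  rw [Finset.sum_congr rfl h,
    Finset.sum_range_sub (fun j : ℕ => Real.sin ((2 * (j : ℝ) - 1) * π / N)) n]
  simp only [Nat.cast_zero]
  have : (2 * (0:ℝ) - 1) * π / N = -(π / N) := by ring
  rw [this, Real.sin_neg]
  ring

private lemma cos_symm (N k : ℕ) (hN : 0 < N) :
    Real.cos (2 * π * ((N : ℝ) - k) / N) = Real.cos (2 * π * k / N) := by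
  have hN' : (N : ℝ) ≠ 0 := Nat.cast_ne_zero.mpr hN.ne'
  have : 2 * π * ((N:ℝ) - k) / N = 2 * π - 2 * π * k / N := by
    field_simp
  rw [this, Real.cos_two_pi_sub]

private lemma cos_mono (N : ℕ) (hN : 0 < N) {a b : ℝ} (ha : 0 ≤ a) (hab : a ≤ b)
    (hb : b ≤ (N : ℝ) / 2) :
    Real.cos (2 * π * b / N) ≤ Real.cos (2 * π * a / N) := by
  have hN' : (0:ℝ) < N := Nat.cast_pos.mpr hN
  apply Real.cos_le_cos_of_nonneg_of_le_pi
  · positivity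
  · rw [div_le_iff₀ hN']
    nlinarith [Real.pi_pos]
  · have h2p : (0:ℝ) ≤ 2 * π := by positivity
    gcongr

/-- For `N ≥ 2` and even `m` with `2 ≤ m ≤ ⌊N/2⌋`, the maximum of
`Σ_{k∈S} cos(2πk/N)` over `m`-element subsets `S ⊆ {0,…,N-1}` is
`sin(mπ/N)·cos(π/N)/sin(π/N)`. -/
theorem max_cos_sum_even (N m : ℕ) (hN : 2 ≤ N) (hm : Even m) (hm2 : 2 ≤ m) (hmN : m ≤ N / 2) :
    IsGreatest {x : ℝ | ∃ S ∈ (Finset.range N).powersetCard m,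
        x = ∑ k ∈ S, Real.cos (2 * Real.pi * k / N)}
      (Real.sin (m * Real.pi / N) * Real.cos (Real.pi / N) / Real.sin (Real.pi / N)) := by
  have hN0 : 0 < N := by omega
  obtain ⟨t, ht⟩ := hm
  have htm : m = 2 * t := by omega
  have ht1 : 1 ≤ t := by omega
  have h2mN : 2 * m ≤ N := by omega
  have hNr : (0:ℝ) < N := by exact_mod_cast hN0
  have hsinpos : 0 < Real.sin (π / N) := by
    apply Real.sin_pos_of_pos_of_lt_pi
    · positivity
    · rw [div_lt_iff₀ hNr]
      nlinarith [Real.pi_pos, show (2:ℝ) ≤ N by exact_mod_cast hN]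
  set T : Finset ℕ := Finset.range (t + 1) ∪ Finset.Ico (N - t + 1) N with hT
  have hdisj : Disjoint (Finset.range (t + 1)) (Finset.Ico (N - t + 1) N) := by
    rw [Finset.disjoint_left]
    intro a ha hb
    simp only [Finset.mem_range, Finset.mem_Ico] at ha hb
    omega
  have hTsub : T ⊆ Finset.range N := by
    intro a ha
    simp only [hT, Finset.mem_union, Finset.mem_range, Finset.mem_Ico] at ha ⊢
    omega
  have hTcard : T.card = m := by
    rw [hT, Finset.card_union_of_disjoint hdisj, Finset.card_range, Nat.card_Ico]
    omega
  have hIco : ∑ j ∈ Finset.Ico (N - t + 1) N, Real.cos (2 * π * j / N)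
      = ∑ i ∈ Finset.Ico 1 t, Real.cos (2 * π * i / N) := by
    apply Finset.sum_nbij' (i := fun j => N - j) (j := fun i => N - i)
    · intro a ha; simp only [Finset.mem_Ico] at *; omega
    · intro a ha; simp only [Finset.mem_Ico] at *; omega
    · intro a ha; simp only [Finset.mem_Ico] at ha; omega
    · intro a ha; simp only [Finset.mem_Ico] at ha; omega
    · intro a ha
      simp only [Finset.mem_Ico] at ha
      have hc : ((N - a : ℕ) : ℝ) = (N : ℝ) - a := by
        have : a ≤ N := by omega
        push_cast [this]; ring
      rw [hc, cos_symm N a hN0]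
  have hIco2 : ∑ i ∈ Finset.Ico 1 t, Real.cos (2 * π * i / N)
      = (∑ i ∈ Finset.range t, Real.cos (2 * π * i / N)) - 1 := by
    rw [Finset.range_eq_Ico, Finset.sum_eq_sum_Ico_succ_bot (by omega : 0 < t)]
    norm_num
  have hsumT : ∑ k ∈ T, Real.cos (2 * π * k / N)
      = (∑ j ∈ Finset.range (t + 1), Real.cos (2 * π * j / N))
        + ((∑ i ∈ Finset.range t, Real.cos (2 * π * i / N)) - 1) := by
    rw [hT, Finset.sum_union hdisj, hIco, hIco2]
  have hval : ∑ k ∈ T, Real.cos (2 * π * k / N)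
      = Real.sin (m * π / N) * Real.cos (π / N) / Real.sin (π / N) := by
    have h2s : (2 * Real.sin (π / N)) ≠ 0 := by positivity
    apply mul_left_cancel₀ h2s
    rw [hsumT]
    have hr : 2 * Real.sin (π / N) * (Real.sin (m * π / N) * Real.cos (π / N) / Real.sin (π / N))
        = 2 * Real.sin (m * π / N) * Real.cos (π / N) := by
      field_simp
    rw [hr]
    have e1 := cos_sum_range N (t + 1)
    have e2 := cos_sum_range N t
    push_cast at e1 e2
    have ha : (2 * ((t:ℝ) + 1) - 1) * π / N = (m : ℝ) * π / N + π / N := by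
      rw [htm]; push_cast; ring
    have hb : (2 * (t:ℝ) - 1) * π / N = (m : ℝ) * π / N - π / N := by
      rw [htm]; push_cast; ring
    rw [ha, Real.sin_add] at e1
    rw [hb, Real.sin_sub] at e2
    nlinarith [e1, e2]
  constructor
  · exact ⟨T, Finset.mem_powersetCard.mpr ⟨hTsub, hTcard⟩, hval.symm⟩
  · rintro x ⟨S, hS, rfl⟩
    rw [Finset.mem_powersetCard] at hS
    obtain ⟨hSsub, hScard⟩ := hS
    rw [← hval]
    set f : ℕ → ℝ := fun k => Real.cos (2 * π * k / N) with hf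
    set c : ℝ := Real.cos (2 * π * t / N) with hc
    have hA : ∀ j ∈ T, c ≤ f j := by
      intro j hj
      simp only [hT, Finset.mem_union, Finset.mem_range, Finset.mem_Ico] at hj
      rcases hj with hj | hj
      · exact cos_mono N hN0 (by positivity) (by exact_mod_cast Nat.lt_succ_iff.mp hj)
          (by rw [le_div_iff₀ (by norm_num : (0:ℝ) < 2)]; push_cast; nlinarith [show (4*t:ℝ) ≤ N by exact_mod_cast (by omega : 4*t ≤ N)])
      · have hjN : j ≤ N := by omega
        have : f j = Real.cos (2 * π * ((N - j : ℕ) : ℝ) / N) := by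
          rw [hf]; simp only
          rw [← cos_symm N (N - j) hN0]
          congr 1
          rw [Nat.cast_sub hjN]
          ring
        rw [this]
        apply cos_mono N hN0 (by positivity)
          (by exact_mod_cast (by omega : N - j ≤ t))
          (by rw [le_div_iff₀ (by norm_num : (0:ℝ) < 2)]; push_cast; nlinarith [show (4*t:ℝ) ≤ N by exact_mod_cast (by omega : 4*t ≤ N)])
    have hB : ∀ k ∈ Finset.range N, k ∉ T → f k ≤ c := by
      intro k hk hkT
      simp only [Finset.mem_range] at hk
      simp only [hT, Finset.mem_union, Finset.mem_range, Finset.mem_Ico, not_or, not_and, not_lt, not_le] at hkT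
      have hk1 : t + 1 ≤ k := by omega
      have hk2 : k ≤ N - t := by omega
      by_cases h2k : 2 * k ≤ N
      · exact cos_mono N hN0 (by positivity) (by exact_mod_cast (by omega : t ≤ k))
          (by rw [le_div_iff₀ (by norm_num : (0:ℝ) < 2)]; exact_mod_cast (by omega : k * 2 ≤ N))
      · have : f k = Real.cos (2 * π * ((N - k : ℕ) : ℝ) / N) := by
          rw [hf]; simp only
          rw [← cos_symm N (N - k) hN0]
          congr 1
          push_cast [show N - k ≤ N by omega, show k ≤ N by omega]
          ring
        rw [this]
        exact cos_mono N hN0 (by positivity) (by exact_mod_cast (by omega : t ≤ N - k))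
          (by rw [le_div_iff₀ (by norm_num : (0:ℝ) < 2)]; exact_mod_cast (by omega : (N - k) * 2 ≤ N))
    have hcard : (S \ T).card = (T \ S).card :=
      Finset.card_sdiff_comm (by rw [hScard, hTcard])
    have h1 : ∑ k ∈ S \ T, f k ≤ (S \ T).card • c := by
      apply Finset.sum_le_card_nsmul
      intro k hk
      rw [Finset.mem_sdiff] at hk
      exact hB k (hSsub hk.1) hk.2
    have h2 : (T \ S).card • c ≤ ∑ k ∈ T \ S, f k := by
      apply Finset.card_nsmul_le_sum
      intro k hk
      exact hA k (Finset.mem_sdiff.mp hk).1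
    calc ∑ k ∈ S, f k = ∑ k ∈ S ∩ T, f k + ∑ k ∈ S \ T, f k :=
          (Finset.sum_inter_add_sum_sdiff S T f).symm
      _ ≤ ∑ k ∈ S ∩ T, f k + (S \ T).card • c := by linarith
      _ = ∑ k ∈ T ∩ S, f k + (T \ S).card • c := by rw [Finset.inter_comm, hcard]
      _ ≤ ∑ k ∈ T ∩ S, f k + ∑ k ∈ T \ S, f k := by linarith
      _ = ∑ k ∈ T, f k := Finset.sum_inter_add_sum_sdiff T S f
end

section
/- Let N ≥ 2 be an even integer and let m be an even positive integer with 2 ≤ m ≤ N/2. Then the minimum of Σ_{k∈S} cos(2πk/N), taken over all m-element subsets S of {0, 1, …, N−1}, equals −sin(mπ/N)·cos(π/N)/sin(π/N). -/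
open Real Finset

/-- If every value of `f` on `A` is at most every value on `B` and cards agree,
then the sum over `A` is at most the sum over `B`. -/
lemma aux_pair_sum_le {f : ℕ → ℝ} {A B : Finset ℕ} (hc : A.card = B.card)
    (h : ∀ a ∈ A, ∀ b ∈ B, f a ≤ f b) : ∑ x ∈ A, f x ≤ ∑ x ∈ B, f x := by
  classical
  let e := Finset.equivOfCardEq hc
  calc ∑ x ∈ A, f x = ∑ x : {x // x ∈ A}, f x := (Finset.sum_coe_sort A f).symm
    _ ≤ ∑ x : {x // x ∈ A}, f (e x) :=
        Finset.sum_le_sum (fun x _ => h x x.2 (e x) (e x).2)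
    _ = ∑ y : {y // y ∈ B}, f y := Equiv.sum_comp e (fun y => f y.1)
    _ = ∑ x ∈ B, f x := Finset.sum_coe_sort B f

/-- Exchange argument: if `T` consists of pointwise-minimal elements of `U`,
then the sum over `T` is at most the sum over any subset `S` of the same card. -/
lemma aux_exchange {f : ℕ → ℝ} {T S U : Finset ℕ} (hT : T ⊆ U) (hS : S ⊆ U)
    (hcard : S.card = T.card)
    (h : ∀ t ∈ T, ∀ k ∈ U, k ∉ T → f t ≤ f k) :
    ∑ x ∈ T, f x ≤ ∑ x ∈ S, f x := by
  classical
  rw [← Finset.sum_inter_add_sum_sdiff T S f, ← Finset.sum_inter_add_sum_sdiff S T f,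
    Finset.inter_comm S T]
  gcongr ?_ + ?_
  · exact le_rfl
  · apply aux_pair_sum_le
    · rw [Finset.card_sdiff_comm hcard.symm]
    · intro a ha b hb
      exact h a (Finset.mem_sdiff.mp ha).1 b (hS (Finset.mem_sdiff.mp hb).1)
        (Finset.mem_sdiff.mp hb).2

/-- Telescoping sum over an interval. -/
lemma aux_telescope (g : ℕ → ℝ) (a b : ℕ) (hab : a ≤ b) :
    ∑ k ∈ Finset.Ico a b, (g (k + 1) - g k) = g b - g a := by
  rw [Finset.sum_Ico_eq_sum_range]
  have h : ∑ k ∈ Finset.range (b - a), (g (a + (k + 1)) - g (a + k))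
      = g (a + (b - a)) - g (a + 0) :=
    Finset.sum_range_sub (fun i => g (a + i)) (b - a)
  calc ∑ k ∈ Finset.range (b - a), (g (a + k + 1) - g (a + k))
      = ∑ k ∈ Finset.range (b - a), (g (a + (k + 1)) - g (a + k)) := by
        apply Finset.sum_congr rfl; intro k _; rw [Nat.add_assoc]
    _ = g (a + (b - a)) - g (a + 0) := h
    _ = g b - g a := by rw [Nat.add_sub_cancel' hab, Nat.add_zero]

/-- For even `N ≥ 2` and even `m` with `2 ≤ m ≤ N/2`, the minimum of
`Σ_{k∈S} cos(2πk/N)` over `m`-element subsets `S ⊆ {0,…,N-1}` is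
`-sin(mπ/N)·cos(π/N)/sin(π/N)`. -/
theorem min_cos_sum_even_even (N m : ℕ) (hN : 2 ≤ N) (hNe : Even N)
    (hm : Even m) (hm2 : 2 ≤ m) (hmN : m ≤ N / 2) :
    IsLeast {x : ℝ | ∃ S ∈ (Finset.range N).powersetCard m,
        x = ∑ k ∈ S, Real.cos (2 * Real.pi * k / N)}
      (-(Real.sin (m * Real.pi / N) * Real.cos (Real.pi / N) / Real.sin (Real.pi / N))) := by
  classical
  obtain ⟨n, hn⟩ := hNe
  obtain ⟨p, hp⟩ := hm
  have hn' : N = 2 * n := by omega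
  have hp' : m = 2 * p := by omega
  have hn1 : 1 ≤ n := by omega
  have hp1 : 1 ≤ p := by omega
  have hpn : 2 * p ≤ n := by omega
  have hNpos : (0 : ℝ) < N := by positivity
  have hc : (0 : ℝ) < Real.pi / N := by positivity
  have hclt : Real.pi / N < Real.pi := by
    rw [div_lt_iff₀ hNpos]
    have h2 : (2 : ℝ) ≤ N := by exact_mod_cast hN
    nlinarith [Real.pi_pos]
  have hsinc : 0 < Real.sin (Real.pi / N) := Real.sin_pos_of_pos_of_lt_pi hc hclt
  set c : ℝ := Real.pi / N with hcdef
  have hNc : (N : ℝ) * c = Real.pi := by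
    rw [hcdef]; field_simp
  have h2nc : (2 : ℝ) * n * c = Real.pi := by
    rw [← hNc, hn']; push_cast; ring
  have hmc : (m : ℝ) * Real.pi / N = 2 * p * c := by
    rw [hcdef, hp']; push_cast; ring
  set f : ℕ → ℝ := fun k => Real.cos (2 * Real.pi * k / N) with hfdef
  have hf : ∀ k : ℕ, f k = Real.cos (2 * k * c) := by
    intro k
    simp only [hfdef, hcdef]
    ring_nf
  set T : Finset ℕ := Finset.Ico (n - p) (n + p) with hTdef
  have hTsub : T ⊆ Finset.range N := by
    intro x hx
    rw [Finset.mem_range]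
    rw [hTdef, Finset.mem_Ico] at hx
    omega
  have hTcard : T.card = m := by
    rw [hTdef, Nat.card_Ico]
    omega
  -- The sum over T
  have hTsum : ∑ k ∈ T, f k =
      -(Real.sin (m * Real.pi / N) * Real.cos c / Real.sin c) := by
    set g : ℕ → ℝ := fun k => Real.sin (2 * k * c - c) with hgdef
    have key : ∀ k : ℕ, f k * (2 * Real.sin c) = g (k + 1) - g k := by
      intro k
      simp only [hgdef, hf]
      push_cast
      rw [show 2 * ((k:ℝ) + 1) * c - c = 2 * k * c + c by ring,
        show 2 * (k:ℝ) * c - c = 2 * k * c - c by ring,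
        Real.sin_add, Real.sin_sub]
      ring
    have hsum2 : (∑ k ∈ T, f k) * (2 * Real.sin c) = g (n + p) - g (n - p) := by
      rw [Finset.sum_mul, hTdef]
      rw [Finset.sum_congr rfl (fun k _ => key k)]
      exact aux_telescope g _ _ (by omega)
    have hub : g (n + p) = -Real.sin ((m : ℝ) * Real.pi / N - c) := by
      simp only [hgdef]
      push_cast
      rw [show 2 * ((n : ℝ) + p) * c - c = ((m : ℝ) * Real.pi / N - c) + Real.pi by
        rw [hmc]; linear_combination h2nc]
      rw [Real.sin_add]
      simp
    have hlb : g (n - p) = Real.sin ((m : ℝ) * Real.pi / N + c) := by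
      simp only [hgdef]
      rw [Nat.cast_sub (by omega : p ≤ n)]
      rw [show 2 * ((n : ℝ) - p) * c - c = Real.pi - ((m : ℝ) * Real.pi / N + c) by
        rw [hmc]; linear_combination h2nc]
      rw [Real.sin_pi_sub]
    have hnum : g (n + p) - g (n - p) =
        -(2 * Real.sin ((m : ℝ) * Real.pi / N) * Real.cos c) := by
      rw [hub, hlb, Real.sin_sub, Real.sin_add]
      ring
    have h2s : (0 : ℝ) < 2 * Real.sin c := by positivity
    have hgoal : -(Real.sin ((m : ℝ) * Real.pi / N) * Real.cos c / Real.sin c)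
        = -(2 * Real.sin ((m : ℝ) * Real.pi / N) * Real.cos c) / (2 * Real.sin c) := by
      rw [neg_div]
      congr 1
      rw [div_eq_div_iff (ne_of_gt hsinc) (ne_of_gt h2s)]
      ring
    rw [hgoal, eq_div_iff (ne_of_gt h2s)]
    exact hsum2.trans hnum
  constructor
  · -- membership
    refine ⟨T, ?_, hTsum.symm⟩
    rw [Finset.mem_powersetCard]
    exact ⟨hTsub, hTcard⟩
  · -- lower bound
    rintro x ⟨S, hS, rfl⟩
    rw [Finset.mem_powersetCard] at hS
    rw [← hTsum]
    apply aux_exchange hTsub hS.1 (by rw [hS.2, hTcard])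
    intro t ht k hk hkT
    rw [hTdef, Finset.mem_Ico] at ht
    rw [Finset.mem_range] at hk
    rw [hTdef, Finset.mem_Ico] at hkT
    -- rewrite f via distance to n
    have h2cpos : (0 : ℝ) < 2 * c := by positivity
    have hshift : ∀ j : ℕ, j < N → f j = -Real.cos (|((j : ℝ) - n)| * (2 * c)) := by
      intro j hj
      rw [hf]
      have habs : |((j : ℝ) - n)| * (2 * c) = |(((j : ℝ) - n)) * (2 * c)| := by
        rw [abs_mul, abs_of_pos h2cpos]
      rw [show 2 * (j : ℝ) * c = (((j : ℝ) - n)) * (2 * c) + Real.pi by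
        linear_combination h2nc]
      rw [Real.cos_add_pi, habs, Real.cos_abs]
    rw [hshift t (by omega), hshift k hk]
    have htd : |((t : ℝ) - n)| ≤ p := by
      rw [abs_le]
      constructor
      · have h1 : ((n - p : ℕ) : ℝ) ≤ t := by exact_mod_cast ht.1
        rw [Nat.cast_sub (by omega)] at h1
        linarith
      · have h1 : (t : ℝ) < n + p := by exact_mod_cast ht.2
        linarith
    have hkd : (p : ℝ) ≤ |((k : ℝ) - n)| := by
      have hkT' : k < n - p ∨ n + p ≤ k := by omega
      rcases hkT' with h | h
      · have h1 : ((k : ℕ) : ℝ) < ((n - p : ℕ) : ℝ) := by exact_mod_cast h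
        rw [Nat.cast_sub (by omega)] at h1
        rw [abs_sub_comm, abs_of_nonneg (by linarith)]
        linarith
      · have h1 : (n : ℝ) + p ≤ k := by exact_mod_cast h
        rw [abs_of_nonneg (by linarith)]
        linarith
    have hkn : |((k : ℝ) - n)| ≤ n := by
      rw [abs_le]
      have h1 : (k : ℝ) < N := by exact_mod_cast hk
      rw [hn'] at h1; push_cast at h1
      have h0 : (0 : ℝ) ≤ k := Nat.cast_nonneg k
      constructor <;> linarith
    have hang : |((k : ℝ) - n)| * (2 * c) ≤ Real.pi := by
      calc |((k : ℝ) - n)| * (2 * c) ≤ (n : ℝ) * (2 * c) :=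
            mul_le_mul_of_nonneg_right hkn (le_of_lt h2cpos)
        _ = Real.pi := by linear_combination h2nc
    have hmono : Real.cos (|((k : ℝ) - n)| * (2 * c)) ≤
        Real.cos (|((t : ℝ) - n)| * (2 * c)) := by
      apply Real.cos_le_cos_of_nonneg_of_le_pi (by positivity) hang
      exact mul_le_mul_of_nonneg_right (le_trans htd hkd) (le_of_lt h2cpos)
    linarith
end

section
/- Let N ≥ 3 be an odd integer and let m be an even positive integer with 2 ≤ m ≤ ⌊N/2⌋. Then the minimum of Σ_{k∈S} cos(2πk/N), taken over all m-element subsets S of {0, 1, …, N−1}, equals −sin(mπ/N)/sin(π/N). -/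
open Real Finset

private lemma tele_cos (N : ℕ) (c : ℕ) :
    (∑ k ∈ Finset.range c, Real.cos (2 * Real.pi * k / N)) * (2 * Real.sin (Real.pi / N))
      = Real.sin ((2 * (c : ℝ) - 1) * Real.pi / N) + Real.sin (Real.pi / N) := by
  induction c with
  | zero =>
      simp only [Finset.range_zero, Finset.sum_empty, Nat.cast_zero, zero_mul]
      have : (2 * (0 : ℝ) - 1) * Real.pi / N = -(Real.pi / N) := by ring
      rw [this, Real.sin_neg]; ring
  | succ c ih =>
      rw [Finset.sum_range_succ, add_mul, ih]
      have key : Real.sin ((2 * ((c : ℝ) + 1) - 1) * Real.pi / N)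
          - Real.sin ((2 * (c : ℝ) - 1) * Real.pi / N)
          = 2 * Real.sin (Real.pi / N) * Real.cos (2 * Real.pi * c / N) := by
        rw [Real.sin_sub_sin]
        congr 1
        · congr 1; ring
        · congr 1; ring
      push_cast
      linarith [key]

/-- For odd `N ≥ 3` and even `m` with `2 ≤ m ≤ ⌊N/2⌋`, the minimum of
`Σ_{k∈S} cos(2πk/N)` over `m`-element subsets `S ⊆ {0,…,N-1}` is `-sin(mπ/N)/sin(π/N)`. -/
theorem min_cos_sum_even_odd (N m : ℕ) (hN : 3 ≤ N) (hNo : Odd N)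
    (hm : Even m) (hm2 : 2 ≤ m) (hmN : m ≤ N / 2) :
    IsLeast {x : ℝ | ∃ S ∈ (Finset.range N).powersetCard m,
        x = ∑ k ∈ S, Real.cos (2 * Real.pi * k / N)}
      (-(Real.sin (m * Real.pi / N) / Real.sin (Real.pi / N))) := by
  obtain ⟨n, hn⟩ := hNo
  obtain ⟨j, hj⟩ := hm
  have hNpos : (0 : ℝ) < N := by positivity
  have hjn : j ≤ n := by omega
  have hj1 : 1 ≤ j := by omega
  set a : ℕ := n + 1 - j with ha
  have haj : a + j = n + 1 := by omega
  have haN : a + m ≤ N := by omega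
  have hsinpos : 0 < Real.sin (Real.pi / N) := by
    apply Real.sin_pos_of_pos_of_lt_pi
    · positivity
    · rw [div_lt_iff₀ hNpos]
      have hN1 : (1:ℝ) < N := by exact_mod_cast (by omega : 1 < N)
      nlinarith [Real.pi_pos]
  have hsin : Real.sin (Real.pi / N) ≠ 0 := ne_of_gt hsinpos
  set f : ℕ → ℝ := fun k => Real.cos (2 * Real.pi * k / N) with hf
  -- monotonicity helper
  have mono : ∀ p q : ℕ, p ≤ q → 2 * q ≤ N → f q ≤ f p := by
    intro p q hpq hq
    apply Real.cos_le_cos_of_nonneg_of_le_pi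
    · positivity
    · rw [div_le_iff₀ hNpos]
      have : (2 : ℝ) * q ≤ N := by exact_mod_cast hq
      nlinarith [Real.pi_pos]
    · have hpq' : (p : ℝ) ≤ q := by exact_mod_cast hpq
      gcongr
  -- symmetry helper
  have symm : ∀ k : ℕ, k ≤ N → f k = f (N - k) := by
    intro k hk
    have hcast : ((N - k : ℕ) : ℝ) = (N : ℝ) - k := by
      push_cast [hk]; ring
    show Real.cos _ = Real.cos _
    rw [hcast]
    have : 2 * Real.pi * ((N : ℝ) - k) / N = 2 * Real.pi - 2 * Real.pi * k / N := by
      field_simp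
    rw [this, Real.cos_two_pi_sub]
  set T : Finset ℕ := Finset.Ico a (a + m) with hT
  -- value on T
  have hTsum : ∑ k ∈ T, f k = -(Real.sin (m * Real.pi / N) / Real.sin (Real.pi / N)) := by
    have hsplit : ∑ k ∈ T, f k = (∑ k ∈ Finset.range (a + m), f k) - ∑ k ∈ Finset.range a, f k :=
      Finset.sum_Ico_eq_sub f (Nat.le_add_right a m)
    have h1 := tele_cos N (a + m)
    have h2 := tele_cos N a
    have e1 : (2 * ((a : ℝ) + m) - 1) * Real.pi / N = Real.pi + m * Real.pi / N := by
      have : 2 * ((a : ℝ) + m) - 1 = (N : ℝ) + m := by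
        have : 2 * (a + m) = N + m + 1 := by omega
        have := congrArg (fun x : ℕ => (x : ℝ)) this
        push_cast at this
        linarith
      rw [this]; field_simp
    have e2 : (2 * (a : ℝ) - 1) * Real.pi / N = Real.pi - m * Real.pi / N := by
      have : 2 * (a : ℝ) - 1 = (N : ℝ) - m := by
        have h2a : 2 * a = N - m + 1 := by omega
        have hmn : m ≤ N := by omega
        have := congrArg (fun x : ℕ => (x : ℝ)) h2a
        push_cast [hmn] at this
        linarith
      rw [this]; field_simp
    have v1 : Real.sin (Real.pi + m * Real.pi / N) = -Real.sin (m * Real.pi / N) := by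
      rw [Real.sin_add]; simp
    have v2 : Real.sin (Real.pi - m * Real.pi / N) = Real.sin (m * Real.pi / N) := Real.sin_pi_sub _
    push_cast at h1
    rw [e1, v1] at h1
    rw [e2, v2] at h2
    have : (∑ k ∈ T, f k) * (2 * Real.sin (Real.pi / N)) = -(2 * Real.sin (m * Real.pi / N)) := by
      rw [hsplit, sub_mul]
      push_cast at h1 h2 ⊢
      rw [h1, h2]; ring
    field_simp at this ⊢
    linarith
  constructor
  · refine ⟨T, ?_, hTsum.symm⟩
    rw [Finset.mem_powersetCard]
    constructor
    · intro k hk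
      rw [Finset.mem_Ico] at hk
      exact Finset.mem_range.mpr (by omega)
    · simp [hT]
  · rintro x ⟨S, hS, rfl⟩
    rw [Finset.mem_powersetCard] at hS
    obtain ⟨hSsub, hScard⟩ := hS
    rw [← hTsum]
    -- claim A : on T, f k ≤ f a ; claim B : off T (within range N), f a ≤ f k
    have claimA : ∀ k ∈ T, f k ≤ f a := by
      intro k hk
      rw [hT, Finset.mem_Ico] at hk
      rcases le_or_gt (2 * k) N with h | h
      · exact mono a k hk.1 h
      · rw [symm k (by omega)]
        exact mono a (N - k) (by omega) (by omega)
    have claimB : ∀ k ∈ Finset.range N, k ∉ T → f a ≤ f k := by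
      intro k hk hkT
      rw [Finset.mem_range] at hk
      rw [hT, Finset.mem_Ico] at hkT
      push_neg at hkT
      rcases lt_or_ge k a with h | h
      · exact mono k a (le_of_lt h) (by omega)
      · have hk2 : a + m ≤ k := hkT h
        rw [symm k (by omega)]
        exact mono (N - k) a (by omega) (by omega)
    have hTcard : T.card = m := by simp [hT]
    have hcard : (S \ T).card = (T \ S).card :=
      Finset.card_sdiff_comm (by rw [hScard, hTcard])
    have hub : ∑ k ∈ T \ S, f k ≤ (T \ S).card • f a := by
      apply Finset.sum_le_card_nsmul
      intro k hk
      exact claimA k (Finset.mem_sdiff.mp hk).1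
    have hlb : (S \ T).card • f a ≤ ∑ k ∈ S \ T, f k := by
      apply Finset.card_nsmul_le_sum
      intro k hk
      rw [Finset.mem_sdiff] at hk
      exact claimB k (hSsub hk.1) hk.2
    have eS := Finset.sum_inter_add_sum_sdiff S T f
    have eT := Finset.sum_inter_add_sum_sdiff T S f
    rw [Finset.inter_comm] at eT
    rw [hcard] at hlb
    linarith
end

section
/- Let N ≥ 2 and let m be an even positive integer with 2 ≤ m ≤ ⌊N/2⌋. Then the maximum of |Σ_{k∈S} sin(2πk/N)|, taken over all m-element subsets S of {0, 1, …, N−1}, equals sin(mπ/N)·sin((2⌊N/4⌋+1)π/N)/sin(π/N); moreover this value is attained both as a maximal value and as the negative of a minimal value of Σ_{k∈S} sin(2πk/N). -/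
open Real Finset

private lemma sin_mul_sin' (a b : ℝ) :
    Real.sin a * Real.sin b = (Real.cos (a - b) - Real.cos (a + b)) / 2 := by
  rw [Real.cos_sub, Real.cos_add]; ring

private lemma sum_sin_mul (x y : ℝ) (n : ℕ) :
    (∑ i ∈ Finset.range n, Real.sin (x + i * y)) * Real.sin (y / 2)
      = (Real.cos (x - y / 2) - Real.cos (x + n * y - y / 2)) / 2 := by
  induction n with
  | zero => simp
  | succ n ih =>
    rw [Finset.sum_range_succ, add_mul, ih, sin_mul_sin']
    have h1 : x + (n : ℝ) * y + y / 2 = x + ((n + 1 : ℕ) : ℝ) * y - y / 2 := by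
      push_cast; ring
    rw [h1]; ring

private lemma sin_le_sin_left (N j k : ℕ) (hN : 0 < N) (hjk : j ≤ k) (hkN : k ≤ N)
    (hsum : 2 * (k + j) ≤ N) :
    Real.sin (2 * Real.pi * j / N) ≤ Real.sin (2 * Real.pi * k / N) := by
  have hN' : (0:ℝ) < N := by exact_mod_cast hN
  have h1 : (j:ℝ) ≤ k := by exact_mod_cast hjk
  have h2 : (k:ℝ) ≤ N := by exact_mod_cast hkN
  have h3 : 2*((k:ℝ) + j) ≤ N := by exact_mod_cast hsum
  have hj0 : (0:ℝ) ≤ j := Nat.cast_nonneg j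
  have key := Real.sin_sub_sin (2*π*k/N) (2*π*j/N)
  have e1 : (2*π*(k:ℝ)/N - 2*π*(j:ℝ)/N)/2 = π*((k:ℝ)-j)/N := by ring
  have e2 : (2*π*(k:ℝ)/N + 2*π*(j:ℝ)/N)/2 = π*((k:ℝ)+j)/N := by ring
  rw [e1, e2] at key
  have hpi := Real.pi_pos
  have hs : 0 ≤ Real.sin (π*((k:ℝ)-j)/N) := by
    apply Real.sin_nonneg_of_nonneg_of_le_pi
    · apply div_nonneg _ hN'.le
      apply mul_nonneg hpi.le; linarith
    · rw [div_le_iff₀ hN']; nlinarith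
  have hc : 0 ≤ Real.cos (π*((k:ℝ)+j)/N) := by
    apply Real.cos_nonneg_of_mem_Icc
    constructor
    · have : (0:ℝ) ≤ π*((k:ℝ)+j)/N := by
        apply div_nonneg _ hN'.le; apply mul_nonneg hpi.le; linarith
      linarith
    · rw [div_le_iff₀ hN']; nlinarith
  nlinarith

private lemma sin_le_sin_right (N j k : ℕ) (hN : 0 < N) (hkj : k ≤ j) (hjN : j ≤ N)
    (h1 : N ≤ 2 * (k + j)) (h2 : 2 * (k + j) ≤ 3 * N) :
    Real.sin (2 * Real.pi * j / N) ≤ Real.sin (2 * Real.pi * k / N) := by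
  have hN' : (0:ℝ) < N := by exact_mod_cast hN
  have hkj' : (k:ℝ) ≤ j := by exact_mod_cast hkj
  have hjN' : (j:ℝ) ≤ N := by exact_mod_cast hjN
  have h1' : (N:ℝ) ≤ 2*((k:ℝ) + j) := by exact_mod_cast h1
  have h2' : 2*((k:ℝ) + j) ≤ 3*N := by exact_mod_cast h2
  have hk0 : (0:ℝ) ≤ k := Nat.cast_nonneg k
  have key := Real.sin_sub_sin (2*π*j/N) (2*π*k/N)
  have e1 : (2*π*(j:ℝ)/N - 2*π*(k:ℝ)/N)/2 = π*((j:ℝ)-k)/N := by ring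
  have e2 : (2*π*(j:ℝ)/N + 2*π*(k:ℝ)/N)/2 = π*((j:ℝ)+k)/N := by ring
  rw [e1, e2] at key
  have hpi := Real.pi_pos
  have hs : 0 ≤ Real.sin (π*((j:ℝ)-k)/N) := by
    apply Real.sin_nonneg_of_nonneg_of_le_pi
    · apply div_nonneg _ hN'.le; apply mul_nonneg hpi.le; linarith
    · rw [div_le_iff₀ hN']; nlinarith
  have hc : Real.cos (π*((j:ℝ)+k)/N) ≤ 0 := by
    apply Real.cos_nonpos_of_pi_div_two_le_of_le
    · rw [le_div_iff₀ hN']; nlinarith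
    · rw [div_le_iff₀ hN']; nlinarith
  nlinarith

private lemma sum_le_sum_of_cross {f : ℕ → ℝ} {U S T : Finset ℕ}
    (hS : S ⊆ U) (hcard : S.card = T.card)
    (hcross : ∀ j ∈ U, j ∉ T → ∀ k ∈ T, f j ≤ f k) :
    ∑ k ∈ S, f k ≤ ∑ k ∈ T, f k := by
  have hsd : (S \ T).card = (T \ S).card := Finset.card_sdiff_comm hcard
  have key : ∑ k ∈ S \ T, f k ≤ ∑ k ∈ T \ S, f k := by
    rcases (T \ S).eq_empty_or_nonempty with he | hne
    · have h0 : S \ T = ∅ := Finset.card_eq_zero.mp (by rw [hsd, he]; simp)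
      simp [h0, he]
    · obtain ⟨k0, hk0, hk0min⟩ := Finset.exists_min_image (T \ S) f hne
      have hk0T : k0 ∈ T := (Finset.mem_sdiff.mp hk0).1
      calc ∑ k ∈ S \ T, f k ≤ ∑ _k ∈ S \ T, f k0 := by
            apply Finset.sum_le_sum
            intro j hj
            exact hcross j (hS (Finset.mem_sdiff.mp hj).1) (Finset.mem_sdiff.mp hj).2 k0 hk0T
        _ = (S \ T).card • f k0 := by rw [Finset.sum_const]
        _ = (T \ S).card • f k0 := by rw [hsd]
        _ ≤ ∑ k ∈ T \ S, f k := Finset.card_nsmul_le_sum _ _ _ (fun k hk => hk0min k hk)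
  have eS := Finset.sum_inter_add_sum_sdiff S T f
  have eT := Finset.sum_inter_add_sum_sdiff T S f
  rw [Finset.inter_comm] at eT
  linarith

/-- For `N ≥ 2` and even `m` with `2 ≤ m ≤ ⌊N/2⌋`, the maximum of
`|Σ_{k∈S} sin(2πk/N)|` over `m`-element subsets `S ⊆ {0,…,N-1}` equals
`sin(mπ/N)·sin((2⌊N/4⌋+1)π/N)/sin(π/N)`; moreover this value is both the maximum of
`Σ_{k∈S} sin(2πk/N)` and the negative of its minimum. -/
theorem max_abs_sin_sum_even (N m : ℕ) (hN : 2 ≤ N) (hm : Even m) (hm2 : 2 ≤ m)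
    (hmN : m ≤ N / 2) :
    IsGreatest {x : ℝ | ∃ S ∈ (Finset.range N).powersetCard m,
        x = |∑ k ∈ S, Real.sin (2 * Real.pi * k / N)|}
      (Real.sin (m * Real.pi / N) * Real.sin (((2 * (N / 4) + 1 : ℕ) : ℝ) * Real.pi / N) /
        Real.sin (Real.pi / N)) ∧
    IsGreatest {x : ℝ | ∃ S ∈ (Finset.range N).powersetCard m,
        x = ∑ k ∈ S, Real.sin (2 * Real.pi * k / N)}
      (Real.sin (m * Real.pi / N) * Real.sin (((2 * (N / 4) + 1 : ℕ) : ℝ) * Real.pi / N) /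
        Real.sin (Real.pi / N)) ∧
    IsLeast {x : ℝ | ∃ S ∈ (Finset.range N).powersetCard m,
        x = ∑ k ∈ S, Real.sin (2 * Real.pi * k / N)}
      (-(Real.sin (m * Real.pi / N) * Real.sin (((2 * (N / 4) + 1 : ℕ) : ℝ) * Real.pi / N) /
        Real.sin (Real.pi / N))) := by
  obtain ⟨h, hm'⟩ := hm
  set q : ℕ := N / 4 with hq
  set f : ℕ → ℝ := fun k => Real.sin (2 * Real.pi * k / N) with hf
  set M : ℝ := Real.sin (m * Real.pi / N) * Real.sin (((2 * (N / 4) + 1 : ℕ) : ℝ) * Real.pi / N) /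
        Real.sin (Real.pi / N) with hM
  -- basic nat facts
  have hh1 : 1 ≤ h := by omega
  have hhq : h ≤ q := by omega
  have h4q : 4 * q ≤ N := by omega
  have h4q' : N < 4 * q + 4 := by omega
  set a : ℕ := q + 1 - h with ha
  have haq : a + h = q + 1 := by omega
  -- central block
  set T : Finset ℕ := (Finset.range m).map ⟨fun i => a + i, add_right_injective a⟩ with hT
  have hTmem : ∀ k, k ∈ T ↔ a ≤ k ∧ k < a + m := by
    intro k
    simp only [hT, Finset.mem_map, Finset.mem_range, Function.Embedding.coeFn_mk]
    constructor
    · rintro ⟨i, hi, rfl⟩; omega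
    · rintro ⟨h1, h2⟩; exact ⟨k - a, by omega, by omega⟩
  have hTsub : T ⊆ Finset.range N := by
    intro k hk
    rw [hTmem] at hk
    rw [Finset.mem_range]; omega
  have hTcard : T.card = m := by simp [hT]
  -- reals
  have hN' : (0:ℝ) < N := by exact_mod_cast Nat.lt_of_lt_of_le Nat.zero_lt_two hN
  have hpi := Real.pi_pos
  have hsinpos : 0 < Real.sin (Real.pi / N) := by
    apply Real.sin_pos_of_pos_of_lt_pi
    · positivity
    · rw [div_lt_iff₀ hN']
      have : (2:ℝ) ≤ N := by exact_mod_cast hN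
      nlinarith
  -- value of the sum over T
  have hval : ∑ k ∈ T, f k = M := by
    have e0 : ∑ k ∈ T, f k = ∑ i ∈ Finset.range m, Real.sin (2*π*(a:ℝ)/N + i * (2*π/N)) := by
      rw [hT, Finset.sum_map]
      apply Finset.sum_congr rfl
      intro i _
      simp only [hf, Function.Embedding.coeFn_mk]
      congr 1
      push_cast; ring
    have e2 := sum_sin_mul (2*π*(a:ℝ)/N) (2*π/N) m
    have ey : (2*π/(N:ℝ))/2 = π/N := by ring
    rw [ey] at e2
    have hc : (a:ℝ) + h = q + 1 := by exact_mod_cast haq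
    have hcm : (m:ℝ) = 2*h := by push_cast [hm']; ring
    have e3 : Real.cos (2*π*(a:ℝ)/N - π/N) - Real.cos (2*π*(a:ℝ)/N + m*(2*π/N) - π/N)
        = 2 * (Real.sin ((m:ℝ) * π / N) * Real.sin (((2 * (N / 4) + 1 : ℕ) : ℝ) * π / N)) := by
      rw [Real.cos_sub_cos]
      have A : ((2*π*(a:ℝ)/N - π/N) + (2*π*(a:ℝ)/N + m*(2*π/N) - π/N))/2
          = ((2 * (N / 4) + 1 : ℕ) : ℝ) * π / N := by
        push_cast
        rw [← hq]
        linear_combination (2*π/(N:ℝ)) * hc + (π/(N:ℝ)) * hcm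
      have B : ((2*π*(a:ℝ)/N - π/N) - (2*π*(a:ℝ)/N + m*(2*π/N) - π/N))/2
          = -((m:ℝ) * π / N) := by ring
      rw [A, B, Real.sin_neg]
      ring
    have e4 : (∑ i ∈ Finset.range m, Real.sin (2*π*(a:ℝ)/N + i * (2*π/N))) * Real.sin (π/N)
        = Real.sin ((m:ℝ) * π / N) * Real.sin (((2 * (N / 4) + 1 : ℕ) : ℝ) * π / N) := by
      rw [e2, e3]; ring
    rw [e0, hM, eq_div_iff hsinpos.ne']
    exact e4
  -- cross inequality
  have hcross : ∀ j ∈ Finset.range N, j ∉ T → ∀ k ∈ T, f j ≤ f k := by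
    intro j hj hjT k hk
    rw [Finset.mem_range] at hj
    rw [hTmem] at hk
    have hjT' : j < a ∨ a + m ≤ j := by
      by_contra hcon
      push_neg at hcon
      exact hjT ((hTmem j).mpr ⟨by omega, by omega⟩)
    rcases hjT' with hja | hja
    · exact sin_le_sin_left N j k (by omega) (by omega) (by omega) (by omega)
    · exact sin_le_sin_right N j k (by omega) (by omega) (by omega) (by omega) (by omega)
  -- upper bound
  have hub : ∀ S ∈ (Finset.range N).powersetCard m, ∑ k ∈ S, f k ≤ M := by
    intro S hS
    rw [Finset.mem_powersetCard] at hS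
    rw [← hval]
    exact sum_le_sum_of_cross hS.1 (by rw [hS.2, hTcard]) hcross
  -- negation closure
  have hneg : ∀ S ∈ (Finset.range N).powersetCard m,
      ∃ S' ∈ (Finset.range N).powersetCard m, ∑ k ∈ S', f k = -∑ k ∈ S, f k := by
    intro S hS
    rw [Finset.mem_powersetCard] at hS
    set σ : ℕ → ℕ := fun k => if k = 0 then 0 else N - k with hσ
    have hSN : ∀ x ∈ S, x < N := fun x hx => Finset.mem_range.mp (hS.1 hx)
    have hinj : ∀ x ∈ S, ∀ y ∈ S, σ x = σ y → x = y := by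
      intro x hx y hy hxy
      have := hSN x hx; have := hSN y hy
      simp only [hσ] at hxy
      split_ifs at hxy <;> omega
    refine ⟨S.image σ, ?_, ?_⟩
    · rw [Finset.mem_powersetCard]
      constructor
      · intro t ht
        obtain ⟨x, hx, rfl⟩ := Finset.mem_image.mp ht
        have := hSN x hx
        rw [Finset.mem_range]
        simp only [hσ]
        split_ifs <;> omega
      · rw [Finset.card_image_of_injOn (fun x hx y hy => hinj x hx y hy), hS.2]
    · rw [Finset.sum_image hinj, ← Finset.sum_neg_distrib]
      apply Finset.sum_congr rfl
      intro x hx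
      have hxN := hSN x hx
      simp only [hσ, hf]
      split_ifs with hx0
      · subst hx0; norm_num
      · have hcast : ((N - x : ℕ) : ℝ) = (N:ℝ) - x := by
          push_cast [Nat.cast_sub hxN.le]; ring
        rw [hcast]
        have harg : 2*π*((N:ℝ) - x)/N = 2*π - 2*π*x/N := by
          field_simp
        rw [harg]
        have : Real.sin (2*π - 2*π*(x:ℝ)/N) = -Real.sin (2*π*(x:ℝ)/N) := by
          rw [Real.sin_sub]
          simp
        rw [this]
  -- membership of M
  have hMmem : M ∈ {x : ℝ | ∃ S ∈ (Finset.range N).powersetCard m,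
      x = ∑ k ∈ S, Real.sin (2 * Real.pi * k / N)} := by
    exact ⟨T, Finset.mem_powersetCard.mpr ⟨hTsub, hTcard⟩, hval.symm⟩
  have hGreat : IsGreatest {x : ℝ | ∃ S ∈ (Finset.range N).powersetCard m,
      x = ∑ k ∈ S, Real.sin (2 * Real.pi * k / N)} M := by
    refine ⟨hMmem, ?_⟩
    rintro x ⟨S, hS, rfl⟩
    exact hub S hS
  have hLeast : IsLeast {x : ℝ | ∃ S ∈ (Finset.range N).powersetCard m,
      x = ∑ k ∈ S, Real.sin (2 * Real.pi * k / N)} (-M) := by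
    constructor
    · obtain ⟨S', hS', hsum'⟩ := hneg T (Finset.mem_powersetCard.mpr ⟨hTsub, hTcard⟩)
      exact ⟨S', hS', by rw [hsum', hval]⟩
    · rintro x ⟨S, hS, rfl⟩
      obtain ⟨S', hS', hsum'⟩ := hneg S hS
      have := hub S' hS'
      rw [hsum'] at this
      linarith
  have hM0 : 0 ≤ M := by
    have := hLeast.2 hMmem
    linarith
  refine ⟨?_, hGreat, hLeast⟩
  constructor
  · refine ⟨T, Finset.mem_powersetCard.mpr ⟨hTsub, hTcard⟩, ?_⟩
    rw [show ∑ k ∈ T, Real.sin (2 * Real.pi * k / N) = M from hval, abs_of_nonneg hM0]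
  · rintro x ⟨S, hS, rfl⟩
    apply abs_le.mpr
    refine ⟨hLeast.2 ⟨S, hS, rfl⟩, hub S hS⟩
end

section
/- Let N ≥ 2 and let m be an odd positive integer with 1 ≤ m ≤ ⌊N/2⌋. Then the maximum of |Σ_{k∈S} sin(2πk/N)|, taken over all m-element subsets S of {0, 1, …, N−1}, equals sin(mπ/N)·sin(2⌊(N+1)/4⌋π/N)/sin(π/N); moreover this value is attained both as a maximal value and as the negative of a minimal value of Σ_{k∈S} sin(2πk/N). -/
open Real Finset

/-- Telescoping closed form for a sum of sines in arithmetic progression. -/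
lemma sin_sum_eq (a d : ℝ) (m : ℕ) :
    Real.sin (d / 2) * ∑ j ∈ Finset.range m, Real.sin (a + j * d)
      = Real.sin (m * d / 2) * Real.sin (a + ((m:ℝ) - 1) * d / 2) := by
  set f : ℕ → ℝ := fun j => Real.cos (a + (j:ℝ)*d - d/2) with hf
  have key : ∀ j : ℕ, Real.sin (d/2) * Real.sin (a + j * d) = (f j - f (j+1)) / 2 := by
    intro j
    have h := Real.cos_sub_cos (a + (j:ℝ)*d - d/2) (a + ((j:ℝ)+1)*d - d/2)
    have h1 : (a + (j:ℝ)*d - d/2 + (a + ((j:ℝ)+1)*d - d/2))/2 = a + j*d := by ring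
    have h2 : (a + (j:ℝ)*d - d/2 - (a + ((j:ℝ)+1)*d - d/2))/2 = -(d/2) := by ring
    rw [h1, h2, Real.sin_neg] at h
    simp only [hf]
    push_cast
    linear_combination -h/2
  have tele : ∑ j ∈ Finset.range m, (f j - f (j+1)) = f 0 - f m :=
    Finset.sum_range_sub' f m
  have step1 : Real.sin (d / 2) * ∑ j ∈ Finset.range m, Real.sin (a + j * d)
      = (f 0 - f m) / 2 := by
    rw [Finset.mul_sum, ← tele, Finset.sum_div]
    exact Finset.sum_congr rfl fun j _ => key j
  rw [step1]
  have h := Real.cos_sub_cos (a + ((0:ℕ):ℝ)*d - d/2) (a + (m:ℝ)*d - d/2)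
  have h1 : (a + ((0:ℕ):ℝ)*d - d/2 + (a + (m:ℝ)*d - d/2))/2 = a + ((m:ℝ)-1)*d/2 := by
    push_cast; ring
  have h2 : (a + ((0:ℕ):ℝ)*d - d/2 - (a + (m:ℝ)*d - d/2))/2 = -((m:ℝ)*d/2) := by
    push_cast; ring
  rw [h1, h2, Real.sin_neg] at h
  simp only [hf]
  linear_combination h/2

lemma cos_mono_abs (x y : ℝ) (h1 : |x| ≤ y) (h2 : y ≤ Real.pi) :
    Real.cos y ≤ Real.cos x := by
  rw [← Real.cos_abs x]
  exact Real.cos_le_cos_of_nonneg_of_le_pi (abs_nonneg x) h2 h1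

lemma g_le_g (Nr : ℝ) (hNr : 0 < Nr) (z w : ℤ) (hzw : |z| ≤ |w|)
    (hw : ((|w| : ℤ) : ℝ) ≤ 2 * Nr) :
    Real.cos ((w:ℝ) * Real.pi / (2*Nr)) ≤ Real.cos ((z:ℝ) * Real.pi / (2*Nr)) := by
  have habs : ∀ u : ℤ, Real.cos ((u:ℝ) * Real.pi / (2*Nr))
      = Real.cos (((|u| : ℤ):ℝ) * Real.pi / (2*Nr)) := by
    intro u
    rw [← Real.cos_abs ((u:ℝ) * Real.pi / (2*Nr))]
    congr 1
    rw [abs_div, abs_mul, abs_of_pos Real.pi_pos,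
      abs_of_pos (by linarith : (0:ℝ) < 2*Nr), Int.cast_abs]
  rw [habs w]
  apply cos_mono_abs
  · rw [abs_div, abs_mul, abs_of_pos Real.pi_pos,
      abs_of_pos (by linarith : (0:ℝ) < 2*Nr), ← Int.cast_abs]
    have hcast : ((|z| : ℤ) : ℝ) ≤ ((|w| : ℤ) : ℝ) := by exact_mod_cast hzw
    have hpi := Real.pi_pos
    have h2N : (0:ℝ) < 2*Nr := by linarith
    gcongr
  · rw [div_le_iff₀ (by linarith : (0:ℝ) < 2*Nr)]
    have hpi := Real.pi_pos
    nlinarith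

lemma g_period (N : ℕ) (z : ℤ) (hN : 0 < N) :
    Real.cos (((z - 4*(N:ℤ) : ℤ):ℝ) * Real.pi / (2*(N:ℝ)))
      = Real.cos ((z:ℝ) * Real.pi / (2*(N:ℝ))) := by
  have hNR : (N:ℝ) ≠ 0 := by positivity
  have h : ((z - 4*(N:ℤ) : ℤ):ℝ) * Real.pi / (2*(N:ℝ))
      = (z:ℝ) * Real.pi / (2*(N:ℝ)) - 2*Real.pi := by
    push_cast
    field_simp
    ring
  rw [h, Real.cos_sub_two_pi]

lemma sin_eq_g (N k : ℕ) (hN : 0 < N) :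
    Real.sin (2 * Real.pi * k / N)
      = Real.cos (((4*(k:ℤ) - N : ℤ):ℝ) * Real.pi / (2*(N:ℝ))) := by
  have hNR : (N:ℝ) ≠ 0 := by positivity
  rw [← Real.cos_pi_div_two_sub (2 * Real.pi * k / N), ← Real.cos_neg]
  congr 1
  push_cast
  field_simp
  ring

lemma sum_le_of_sep {f : ℕ → ℝ} {S B : Finset ℕ} (hcard : S.card = B.card) {C : ℝ}
    (hout : ∀ k ∈ S, k ∉ B → f k ≤ C) (hin : ∀ k ∈ B, C ≤ f k) :
    ∑ k ∈ S, f k ≤ ∑ k ∈ B, f k := by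
  have h1 : ∑ k ∈ S \ B, f k ≤ (S \ B).card • C :=
    Finset.sum_le_card_nsmul _ _ _
      (fun k hk => hout k (Finset.mem_sdiff.mp hk).1 (Finset.mem_sdiff.mp hk).2)
  have h2 : (B \ S).card • C ≤ ∑ k ∈ B \ S, f k :=
    Finset.card_nsmul_le_sum _ _ _ (fun k hk => hin k (Finset.mem_sdiff.mp hk).1)
  have e1 : ∑ k ∈ S ∩ B, f k + ∑ k ∈ S \ B, f k = ∑ k ∈ S, f k :=
    Finset.sum_inter_add_sum_sdiff S B f
  have e2 : ∑ k ∈ B ∩ S, f k + ∑ k ∈ B \ S, f k = ∑ k ∈ B, f k :=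
    Finset.sum_inter_add_sum_sdiff B S f
  have hcS : (S ∩ B).card + (S \ B).card = S.card :=
    Finset.card_inter_add_card_sdiff S B
  have hcB : (B ∩ S).card + (B \ S).card = B.card :=
    Finset.card_inter_add_card_sdiff B S
  have hie : ∑ k ∈ S ∩ B, f k = ∑ k ∈ B ∩ S, f k := by rw [Finset.inter_comm]
  have hcc : (S \ B).card = (B \ S).card := by
    have : (S ∩ B).card = (B ∩ S).card := by rw [Finset.inter_comm]
    omega
  have hsm : ((S \ B).card : ℕ) • C = ((B \ S).card : ℕ) • C := by rw [hcc]
  linarith [h1, h2, hsm.le, hsm.ge]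

lemma sigma_invol (N k : ℕ) (hk : k < N) : (N - ((N - k) % N)) % N = k := by
  rcases Nat.eq_zero_or_pos k with h0 | h0
  · subst h0; simp [Nat.mod_self]
  · have h1 : (N - k) % N = N - k := Nat.mod_eq_of_lt (by omega)
    rw [h1]
    have h2 : N - (N - k) = k := by omega
    rw [h2, Nat.mod_eq_of_lt hk]

lemma sin_sigma (N k : ℕ) (hN : 2 ≤ N) (hk : k < N) :
    Real.sin (2 * Real.pi * (((N - k) % N : ℕ):ℝ) / N)
      = - Real.sin (2 * Real.pi * k / N) := by
  have hNR : (N:ℝ) ≠ 0 := by positivity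
  rcases Nat.eq_zero_or_pos k with h0 | h0
  · subst h0
    simp [Nat.mod_self]
  · have h1 : (N - k) % N = N - k := Nat.mod_eq_of_lt (by omega)
    rw [h1, Nat.cast_sub hk.le]
    have h : 2 * Real.pi * ((N:ℝ) - k) / N = -(2 * Real.pi * k / N) + 2*Real.pi := by
      field_simp
      ring
    rw [h, Real.sin_add_two_pi, Real.sin_neg]

/-- For `N ≥ 2` and odd `m` with `1 ≤ m ≤ ⌊N/2⌋`, the maximum of
`|Σ_{k∈S} sin(2πk/N)|` over `m`-element subsets `S ⊆ {0,…,N-1}` equals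
`sin(mπ/N)·sin(2⌊(N+1)/4⌋π/N)/sin(π/N)`; moreover this value is both the maximum of
`Σ_{k∈S} sin(2πk/N)` and the negative of its minimum. -/
theorem max_abs_sin_sum_odd (N m : ℕ) (hN : 2 ≤ N) (hm : Odd m) (hm1 : 1 ≤ m)
    (hmN : m ≤ N / 2) :
    IsGreatest {x : ℝ | ∃ S ∈ (Finset.range N).powersetCard m,
        x = |∑ k ∈ S, Real.sin (2 * Real.pi * k / N)|}
      (Real.sin (m * Real.pi / N) * Real.sin (((2 * ((N + 1) / 4) : ℕ) : ℝ) * Real.pi / N) /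
        Real.sin (Real.pi / N)) ∧
    IsGreatest {x : ℝ | ∃ S ∈ (Finset.range N).powersetCard m,
        x = ∑ k ∈ S, Real.sin (2 * Real.pi * k / N)}
      (Real.sin (m * Real.pi / N) * Real.sin (((2 * ((N + 1) / 4) : ℕ) : ℝ) * Real.pi / N) /
        Real.sin (Real.pi / N)) ∧
    IsLeast {x : ℝ | ∃ S ∈ (Finset.range N).powersetCard m,
        x = ∑ k ∈ S, Real.sin (2 * Real.pi * k / N)}
      (-(Real.sin (m * Real.pi / N) * Real.sin (((2 * ((N + 1) / 4) : ℕ) : ℝ) * Real.pi / N) /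
        Real.sin (Real.pi / N))) := by
  obtain ⟨t, ht⟩ := hm
  have hm2 : m = 2*t + 1 := by omega
  have h2m : 2*m ≤ N := by omega
  have hNpos : 0 < N := by omega
  have hN0 : (0:ℝ) < N := by exact_mod_cast hNpos
  have hNR : (N:ℝ) ≠ 0 := ne_of_gt hN0
  set c : ℕ := (N+1)/4 with hc
  have htc : t ≤ c := by omega
  have hct : c + t < N := by omega
  set M : ℝ := Real.sin (m * Real.pi / N) * Real.sin (((2 * c : ℕ) : ℝ) * Real.pi / N) /
    Real.sin (Real.pi / N) with hMdef
  -- the block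
  set B : Finset ℕ := (Finset.range m).image (fun j => c - t + j) with hB
  have hBmem : ∀ k, k ∈ B ↔ c - t ≤ k ∧ k ≤ c + t := by
    intro k
    rw [hB]
    simp only [Finset.mem_image, Finset.mem_range]
    constructor
    · rintro ⟨j, hj, rfl⟩; omega
    · intro h; exact ⟨k - (c - t), by omega, by omega⟩
  have hBsub : B ⊆ Finset.range N := by
    intro k hk; rw [Finset.mem_range]
    have := (hBmem k).mp hk; omega
  have hBcard : B.card = m := by
    rw [hB, Finset.card_image_of_injective _ (fun a b hab => by omega), Finset.card_range]
  have hBp : B ∈ (Finset.range N).powersetCard m :=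
    Finset.mem_powersetCard.mpr ⟨hBsub, hBcard⟩
  -- positivity of sin(π/N)
  have hsin_pos : 0 < Real.sin (Real.pi/N) := by
    apply Real.sin_pos_of_pos_of_lt_pi
    · positivity
    · exact div_lt_self Real.pi_pos (by exact_mod_cast (by omega : 1 < N))
  -- the value of the block sum
  have hBsum : ∑ k ∈ B, Real.sin (2 * Real.pi * k / N) = M := by
    have himg : ∑ k ∈ B, Real.sin (2 * Real.pi * (k:ℝ) / N)
        = ∑ j ∈ Finset.range m,
            Real.sin (2*Real.pi*((c-t:ℕ):ℝ)/N + j * (2*Real.pi/N)) := by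
      rw [hB, Finset.sum_image (fun a _ b _ hab => by omega)]
      refine Finset.sum_congr rfl fun j _ => ?_
      congr 1
      rw [Nat.cast_add]
      field_simp
    have hkey := sin_sum_eq (2*Real.pi*((c-t:ℕ):ℝ)/N) (2*Real.pi/N) m
    have hd2 : (2*Real.pi/(N:ℝ))/2 = Real.pi/N := by ring
    rw [hd2] at hkey
    have hmr : (m:ℝ) = 2*(t:ℝ)+1 := by exact_mod_cast hm2
    have harg1 : (m:ℝ)*(2*Real.pi/(N:ℝ))/2 = (m:ℝ)*Real.pi/N := by ring
    have harg2 : 2*Real.pi*((c-t:ℕ):ℝ)/N + ((m:ℝ)-1)*(2*Real.pi/(N:ℝ))/2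
        = ((2*c : ℕ):ℝ)*Real.pi/N := by
      rw [Nat.cast_sub htc, hmr]
      push_cast
      field_simp
      ring
    rw [harg1, harg2] at hkey
    rw [himg, hMdef, eq_div_iff (ne_of_gt hsin_pos)]
    linear_combination hkey
  -- cos C rewrite
  have hCeq : Real.cos ((m:ℝ)*Real.pi/N) = Real.cos (((2*(m:ℤ) : ℤ):ℝ) * Real.pi / (2*(N:ℝ))) := by
    congr 1
    push_cast
    field_simp
  -- upper bound
  have hub : ∀ S ∈ (Finset.range N).powersetCard m,
      ∑ k ∈ S, Real.sin (2 * Real.pi * k / N) ≤ M := by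
    intro S hS
    rw [Finset.mem_powersetCard] at hS
    obtain ⟨hSsub, hScard⟩ := hS
    rw [← hBsum]
    refine sum_le_of_sep (by rw [hScard, hBcard]) (C := Real.cos ((m:ℝ)*Real.pi/N)) ?_ ?_
    · intro k hk hkB
      have hkN : k < N := Finset.mem_range.mp (hSsub hk)
      have hk1 : ¬(c - t ≤ k ∧ k ≤ c + t) := fun h => hkB ((hBmem k).mpr h)
      rw [sin_eq_g N k hNpos, hCeq]
      by_cases hbig : 4*k ≤ 3*N
      · apply g_le_g (N:ℝ) hN0
        · rw [abs_of_nonneg (by positivity : (0:ℤ) ≤ 2*(m:ℤ)), le_abs]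
          omega
        · have habs : |4*(k:ℤ) - (N:ℤ)| ≤ 2*(N:ℤ) := by rw [abs_le]; constructor <;> omega
          exact_mod_cast habs
      · conv_lhs => rw [← g_period N (4*(k:ℤ) - (N:ℤ)) hNpos]
        apply g_le_g (N:ℝ) hN0
        · rw [abs_of_nonneg (by positivity : (0:ℤ) ≤ 2*(m:ℤ)), le_abs]
          omega
        · have habs : |4*(k:ℤ) - (N:ℤ) - 4*(N:ℤ)| ≤ 2*(N:ℤ) := by
            rw [abs_le]; constructor <;> omega
          exact_mod_cast habs
    · intro k hk
      have hkr := (hBmem k).mp hk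
      rw [sin_eq_g N k hNpos, hCeq]
      apply g_le_g (N:ℝ) hN0
      · rw [abs_of_nonneg (by positivity : (0:ℤ) ≤ 2*(m:ℤ)), abs_le]
        constructor <;> omega
      · rw [abs_of_nonneg (by positivity : (0:ℤ) ≤ 2*(m:ℤ))]
        have : (2*(m:ℤ) : ℤ) ≤ 2*(N:ℤ) := by omega
        exact_mod_cast this
  -- negation symmetry
  have hneg : ∀ S ∈ (Finset.range N).powersetCard m,
      ∃ T ∈ (Finset.range N).powersetCard m,
        ∑ k ∈ T, Real.sin (2 * Real.pi * k / N)
          = - ∑ k ∈ S, Real.sin (2 * Real.pi * k / N) := by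
    intro S hS
    rw [Finset.mem_powersetCard] at hS
    obtain ⟨hSsub, hScard⟩ := hS
    have hinj : ∀ a ∈ S, ∀ b ∈ S, (N - a) % N = (N - b) % N → a = b := by
      intro a ha b hb hab
      have haN : a < N := Finset.mem_range.mp (hSsub ha)
      have hbN : b < N := Finset.mem_range.mp (hSsub hb)
      have h1 := sigma_invol N a haN
      rw [hab, sigma_invol N b hbN] at h1
      omega
    refine ⟨S.image (fun k => (N - k) % N), ?_, ?_⟩
    · rw [Finset.mem_powersetCard]
      constructor
      · intro x hx
        simp only [Finset.mem_image] at hx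
        obtain ⟨k, hk, rfl⟩ := hx
        exact Finset.mem_range.mpr (Nat.mod_lt _ hNpos)
      · rw [Finset.card_image_of_injOn hinj, hScard]
    · rw [Finset.sum_image hinj, ← Finset.sum_neg_distrib]
      refine Finset.sum_congr rfl fun k hk => ?_
      exact sin_sigma N k hN (Finset.mem_range.mp (hSsub hk))
  -- nonnegativity of M
  obtain ⟨T0, hT0, hT0sum⟩ := hneg B hBp
  have hT0M : ∑ k ∈ T0, Real.sin (2 * Real.pi * k / N) = -M := by rw [hT0sum, hBsum]
  have hM0 : 0 ≤ M := by
    have := hub T0 hT0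
    rw [hT0M] at this
    linarith
  -- lower bound
  have hlb : ∀ S ∈ (Finset.range N).powersetCard m,
      -M ≤ ∑ k ∈ S, Real.sin (2 * Real.pi * k / N) := by
    intro S hS
    obtain ⟨T, hT, hTs⟩ := hneg S hS
    have := hub T hT
    rw [hTs] at this
    linarith
  refine ⟨⟨⟨B, hBp, ?_⟩, ?_⟩, ⟨⟨B, hBp, hBsum.symm⟩, ?_⟩, ⟨⟨T0, hT0, hT0M.symm⟩, ?_⟩⟩
  · rw [hBsum, abs_of_nonneg hM0]
  · rintro x ⟨S, hS, rfl⟩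
    rw [abs_le]
    exact ⟨hlb S hS, hub S hS⟩
  · rintro x ⟨S, hS, rfl⟩
    exact hub S hS
  · rintro x ⟨S, hS, rfl⟩
    exact hlb S hS
end
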